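/- arXiv:1711.09373 — 12 statements merged into one kernel-verified Lean document; each statement's English description precedes it below -/
import Mathlib

section
/- If H is a circulant Hadamard matrix of order 4n (entries ±1, rows cyclic shifts of the first row, H·Hᵀ = 4n·I), then n is a perfect square. -/
open Matrix

/-- If H is a circulant Hadamard matrix of order 4n
(entries ±1, rows cyclic shifts of the first row, H·Hᵀ = 4n·I),
then n is a perfect square. -/
theorem circulant_hadamard_order_is_square (n : ℕ) (a : Fin (4 * n) → ℤ)
    (ha : ∀ i, a i = 1 ∨ a i = -1)
    (hH : Matrix.circulant a * (Matrix.circulant a)ᵀ =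
      ((4 * n : ℕ) : ℤ) • (1 : Matrix (Fin (4 * n)) (Fin (4 * n)) ℤ)) :
    ∃ m : ℕ, n = m ^ 2 := by
  rcases Nat.eq_zero_or_pos n with h0 | hn
  · exact ⟨0, by simp [h0]⟩
  haveI : NeZero (4 * n) := ⟨by omega⟩
  set s := ∑ i, a i with hs
  have hrow : ∀ k : Fin (4 * n), ∑ j, a (j - k) = s := by
    intro k
    exact Fintype.sum_equiv (Equiv.subRight k) _ _ (fun j => rfl)
  have hneg : ∑ k : Fin (4 * n), a (0 - k) = s := by
    simpa using Fintype.sum_equiv (Equiv.neg (Fin (4 * n))) (fun k => a (0 - k)) a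
      (fun k => by simp)
  have key : s * s = (4 * n : ℤ) := by
    have h1 : ∑ j, (Matrix.circulant a * (Matrix.circulant a)ᵀ) 0 j
        = ∑ j, (((4 * n : ℕ) : ℤ) • (1 : Matrix (Fin (4 * n)) (Fin (4 * n)) ℤ)) 0 j := by
      rw [hH]
    have hL : ∑ j, (Matrix.circulant a * (Matrix.circulant a)ᵀ) 0 j = s * s := by
      simp only [Matrix.mul_apply, Matrix.transpose_apply, Matrix.circulant_apply]
      rw [Finset.sum_comm]
      calc ∑ k : Fin (4*n), ∑ j : Fin (4*n), a (0 - k) * a (j - k)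
          = ∑ k : Fin (4*n), a (0 - k) * ∑ j : Fin (4*n), a (j - k) := by
            simp [Finset.mul_sum]
        _ = ∑ k : Fin (4*n), a (0 - k) * s := by simp [hrow]
        _ = s * s := by rw [← Finset.sum_mul, hneg]
    have hR : ∑ j, (((4 * n : ℕ) : ℤ) • (1 : Matrix (Fin (4 * n)) (Fin (4 * n)) ℤ)) 0 j
        = (4 * n : ℤ) := by
      simp [Matrix.one_apply]
    rw [hL, hR] at h1
    exact_mod_cast h1
  have h2 : (2 : ℤ) ∣ s := by
    have : (2 : ℤ) ∣ s * s := ⟨2 * n, by rw [key]; ring⟩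
    exact (Int.prime_two.dvd_mul.mp this).elim id id
  obtain ⟨t, ht⟩ := h2
  refine ⟨t.natAbs, ?_⟩
  have : (n : ℤ) = (t.natAbs : ℤ) ^ 2 := by
    have := key
    rw [ht] at this
    rw [Int.natAbs_sq]
    nlinarith
  exact_mod_cast this
end

section
/- If H is a circulant Hadamard matrix of order 4n and H' is the corresponding binary matrix (replacing 1 by 0 and -1 by 1), then every column of H' has Hamming weight equal to 2n + √n or 2n − √n, where √n is an integer (the weight being the same, 2n+σ with σ = ±√n, for all columns). -/
open Matrix

/-- If H is a circulant Hadamard matrix of order 4n and H' is the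
corresponding binary matrix (1 ↦ 0, −1 ↦ 1), then every column of H' has Hamming
weight 2n + σ, where σ = ±√n is an integer with σ² = n (the same σ for all columns). -/
theorem circulant_hadamard_column_weight (n : ℕ) (a : Fin (4 * n) → ℤ)
    (ha : ∀ i, a i = 1 ∨ a i = -1)
    (hH : Matrix.circulant a * (Matrix.circulant a)ᵀ =
      ((4 * n : ℕ) : ℤ) • (1 : Matrix (Fin (4 * n)) (Fin (4 * n)) ℤ)) :
    ∃ σ : ℤ, σ ^ 2 = (n : ℤ) ∧
      ∀ j : Fin (4 * n),
        ((Finset.univ.filter fun i : Fin (4 * n) => Matrix.circulant a i j = -1).card : ℤ)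
          = 2 * n + σ := by
  rcases Nat.eq_zero_or_pos n with hn | hn
  · subst hn
    exact ⟨0, by norm_num, fun j => absurd j.2 (by simp)⟩
  haveI : NeZero (4 * n) := ⟨by omega⟩
  set k : ℕ := (Finset.univ.filter fun i => a i = -1).card with hk
  -- each column has k entries equal to -1
  have hcard : ∀ j : Fin (4 * n),
      (Finset.univ.filter fun i : Fin (4 * n) => Matrix.circulant a i j = -1).card = k := by
    intro j
    simp only [Matrix.circulant_apply, hk]
    refine Finset.card_bij' (fun i _ => i - j) (fun i _ => i + j) ?_ ?_ ?_ ?_ <;>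
      simp [sub_add_cancel, add_sub_cancel_right]
    · intro x hx
      exact (Finset.mem_filter.mp hx).2
    · intro x hx
      exact Finset.mem_filter.mpr ⟨Finset.mem_univ _, by simpa using hx⟩
  set S : ℤ := ∑ i, a i with hS
  have hSval : S = 4 * n - 2 * k := by
    have hsplit := Finset.sum_filter_add_sum_filter_not Finset.univ
      (fun i : Fin (4 * n) => a i = -1) a
    have h1 : ∑ i ∈ Finset.univ.filter (fun i : Fin (4 * n) => a i = -1), a i = -(k : ℤ) := by
      rw [Finset.sum_congr rfl (fun i hi => (Finset.mem_filter.mp hi).2)]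
      simp [hk]
    have h2 : ∑ i ∈ Finset.univ.filter (fun i : Fin (4 * n) => ¬ a i = -1), a i
        = ((Finset.univ.filter fun i : Fin (4 * n) => ¬ a i = -1).card : ℤ) := by
      rw [Finset.sum_congr rfl (fun i hi => ((ha i).resolve_right (Finset.mem_filter.mp hi).2))]
      simp
    have hc : (Finset.univ.filter fun i : Fin (4 * n) => ¬ a i = -1).card = 4 * n - k := by
      have := Finset.card_filter_add_card_filter_not
        (s := (Finset.univ : Finset (Fin (4 * n)))) (p := fun i => a i = -1)
      simp only [Finset.card_univ, Fintype.card_fin] at this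
      omega
    have hkle : k ≤ 4 * n := by
      have := Finset.card_filter_le (Finset.univ : Finset (Fin (4 * n))) (fun i => a i = -1)
      simpa using this
    rw [hS, ← hsplit, h1, h2, hc]
    push_cast [hkle]
    ring
  -- sum of all entries of both sides
  have hsum := congrArg (fun M : Matrix (Fin (4 * n)) (Fin (4 * n)) ℤ => ∑ i, ∑ l, M i l) hH
  simp only [Matrix.mul_apply, Matrix.transpose_apply, Matrix.circulant_apply,
    Matrix.smul_apply, Matrix.one_apply, smul_eq_mul] at hsum
  have hshift : ∀ j : Fin (4 * n), ∑ i, a (i - j) = S := by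
    intro j
    exact Equiv.sum_comp (Equiv.subRight j) a
  have hLHS : (∑ i : Fin (4 * n), ∑ l : Fin (4 * n), ∑ j : Fin (4 * n), a (i - j) * a (l - j))
      = (4 * n : ℤ) * S ^ 2 := by
    rw [Finset.sum_congr rfl fun i _ => Finset.sum_comm (s := Finset.univ) (t := Finset.univ) (f := fun l j => a (i - j) * a (l - j)),
      Finset.sum_comm]
    simp_rw [← Finset.mul_sum, hshift, ← Finset.sum_mul, hshift]
    simp
    ring
  have hRHS : (∑ i : Fin (4 * n), ∑ l : Fin (4 * n),
      ((4 * n : ℕ) : ℤ) * (if i = l then 1 else 0)) = (4 * n : ℤ) * (4 * n : ℤ) := by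
    simp [Finset.sum_ite_eq]
  rw [hLHS, hRHS] at hsum
  have hS2 : S ^ 2 = 4 * n := by
    have h4 : (0 : ℤ) < 4 * n := by positivity
    exact mul_left_cancel₀ (ne_of_gt h4) hsum
  refine ⟨(k : ℤ) - 2 * n, ?_, ?_⟩
  · nlinarith [hSval, hS2]
  · intro j
    rw [hcard j]
    ring
end

section
/- Let g ∈ F₂[x]/(x^{4n}−1) be the binary generator polynomial of a circulant Hadamard matrix of order 4n. Then the code C = {g + x^i·g + ξ·u : 0 ≤ i ≤ 4n−1, ξ ∈ F₂}, where u is the all-ones polynomial, equipped with the operation (g + x^i g + ξu) * (g + x^j g + ξ'u) = g + x^{i+j} g + (ξ+ξ')u, is a group isomorphic to C_{4n} × C₂. -/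
instance fourMulNeZero (n : ℕ) [NeZero n] : NeZero (4 * n) :=
  ⟨Nat.mul_ne_zero (by norm_num) (NeZero.ne n)⟩

/-- Cyclic shift by `i` positions: the vector of `x^i · v` in `F₂[x]/(x^m − 1)`. -/
def shift (m : ℕ) (i : ZMod m) (v : ZMod m → ZMod 2) : ZMod m → ZMod 2 :=
  fun t => v (t - i)

/-- The all-ones vector `u`. -/
def allOne (m : ℕ) : ZMod m → ZMod 2 := fun _ => 1

/-- `g` is the binary generator polynomial of a circulant Hadamard matrix of order `4n`:
the binary rows `x^i·g` are pairwise at Hamming distance `2n`. -/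
def IsCircHadGen (n : ℕ) [NeZero n] (g : ZMod (4 * n) → ZMod 2) : Prop :=
  ∀ i j : ZMod (4 * n), i ≠ j →
    hammingDist (shift (4 * n) i g) (shift (4 * n) j g) = 2 * n

/-- The kernel `K(C) = {x : x + C = C}` of a binary code. -/
def kernelOf {V : Type} [Add V] (C : Set V) : Set V :=
  {x | (fun v => x + v) '' C = C}

/-- the code `C = {g + x^i·g + ξ·u}` arising from a circulant Hadamard
matrix, with the operation `(g+x^i g+ξu) * (g+x^j g+ξ'u) = g+x^{i+j} g+(ξ+ξ')u`
(i.e. `x * y = x + π_x(y)` with `π_x` the shift), is a group isomorphic to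
`C_{4n} × C₂`. -/
theorem circulant_code_group_structure (n : ℕ) [NeZero n]
    (g : ZMod (4 * n) → ZMod 2) (hg : IsCircHadGen n g)
    (C : Set (ZMod (4 * n) → ZMod 2))
    (hC : C = {v | ∃ (i : ZMod (4 * n)) (ξ : ZMod 2),
      v = g + shift (4 * n) i g + ξ • allOne (4 * n)}) :
    ∃ e : ZMod (4 * n) × ZMod 2 ≃ C,
      (∀ p : ZMod (4 * n) × ZMod 2,
        (e p : ZMod (4 * n) → ZMod 2) = g + shift (4 * n) p.1 g + p.2 • allOne (4 * n)) ∧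
      (∀ p q : ZMod (4 * n) × ZMod 2,
        (e (p + q) : ZMod (4 * n) → ZMod 2) =
          (e p : ZMod (4 * n) → ZMod 2) + shift (4 * n) p.1 (e q : ZMod (4 * n) → ZMod 2)) := by
  classical
  have hn : (n : ℕ) ≠ 0 := NeZero.ne n
  -- shift of equal indices injective
  have hshift_inj : ∀ i j : ZMod (4 * n),
      shift (4 * n) i g = shift (4 * n) j g → i = j := by
    intro i j h
    by_contra hne
    have h2 := hg i j hne
    rw [h, hammingDist_self] at h2
    omega
  -- if they differ by the all-one vector, contradiction
  have hshift_u : ∀ i j : ZMod (4 * n),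
      shift (4 * n) i g = shift (4 * n) j g + allOne (4 * n) → False := by
    intro i j h
    have hne' : ∀ t, shift (4 * n) i g t ≠ shift (4 * n) j g t := by
      intro t
      have := congrFun h t
      rw [Pi.add_apply] at this
      rw [this]
      simp only [allOne]
      generalize shift (4 * n) j g t = a
      revert a; decide
    by_cases hij : i = j
    · exact (hne' 0) (by rw [hij])
    · have h2 := hg i j hij
      have h4 : hammingDist (shift (4 * n) i g) (shift (4 * n) j g) = 4 * n := by
        rw [hammingDist]
        rw [show (Finset.filter (fun t => shift (4 * n) i g t ≠ shift (4 * n) j g t)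
          Finset.univ) = Finset.univ from Finset.filter_true_of_mem (fun t _ => hne' t)]
        simp [ZMod.card]
      omega
  -- injectivity of the parametrization
  have hinj : ∀ p q : ZMod (4 * n) × ZMod 2,
      g + shift (4 * n) p.1 g + p.2 • allOne (4 * n)
        = g + shift (4 * n) q.1 g + q.2 • allOne (4 * n) → p = q := by
    rintro ⟨i, ξ⟩ ⟨j, ξ'⟩ h
    simp only at h
    have h' : shift (4 * n) i g + ξ • allOne (4 * n)
        = shift (4 * n) j g + ξ' • allOne (4 * n) := by
      have := congrArg (fun v => v - g) h
      simpa [add_assoc, add_sub_cancel_left, add_comm, add_left_comm] using this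
    have hz2 : ∀ a : ZMod 2, a = 0 ∨ a = 1 := by decide
    rcases hz2 ξ with h0 | h1 <;> rcases hz2 ξ' with h0' | h1'
    · subst h0; subst h0'
      simp only [zero_smul, add_zero] at h'
      exact Prod.ext (hshift_inj _ _ h') rfl
    · subst h0; subst h1'
      simp only [zero_smul, add_zero, one_smul] at h'
      exact absurd h' (fun h' => hshift_u _ _ h')
    · subst h1; subst h0'
      simp only [zero_smul, add_zero, one_smul] at h'
      exact absurd h'.symm (fun h'' => hshift_u _ _ h'')
    · subst h1; subst h1'
      simp only [one_smul] at h'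
      have := add_right_cancel h'
      exact Prod.ext (hshift_inj _ _ this) rfl
  -- the map into C
  have hmem : ∀ p : ZMod (4 * n) × ZMod 2,
      g + shift (4 * n) p.1 g + p.2 • allOne (4 * n) ∈ C := by
    intro p; rw [hC]; exact ⟨p.1, p.2, rfl⟩
  let f : ZMod (4 * n) × ZMod 2 → C :=
    fun p => ⟨g + shift (4 * n) p.1 g + p.2 • allOne (4 * n), hmem p⟩
  have hbij : Function.Bijective f := by
    constructor
    · intro p q h
      exact hinj p q (congrArg Subtype.val h)
    · rintro ⟨v, hv⟩
      rw [hC] at hv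
      obtain ⟨i, ξ, hvi⟩ := hv
      exact ⟨(i, ξ), Subtype.ext hvi.symm⟩
  refine ⟨Equiv.ofBijective f hbij, fun p => rfl, ?_⟩
  intro p q
  show (f (p + q) : ZMod (4 * n) → ZMod 2)
      = (f p : ZMod (4 * n) → ZMod 2) + shift (4 * n) p.1 (f q : ZMod (4 * n) → ZMod 2)
  funext t
  simp only [f, Pi.add_apply, Pi.smul_apply, shift, allOne, Prod.fst_add, Prod.snd_add,
    smul_eq_mul, mul_one]
  rw [show t - p.1 - q.1 = t - (p.1 + q.1) by ring]
  generalize g t = A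
  generalize g (t - p.1) = B
  generalize g (t - (p.1 + q.1)) = D
  generalize p.2 = ξ
  generalize q.2 = ξ'
  revert A B D ξ ξ'; decide
end

section
/- Let g be the binary generator polynomial of a circulant Hadamard matrix of order 4n and let C = {g + x^i g + ξu : 0 ≤ i ≤ 4n−1, ξ ∈ F₂}. Then C is a Hadamard code: every nonzero codeword different from u has Hamming weight exactly 2n, and any two distinct codewords are at Hamming distance 2n or 4n. -/
lemma fun_sub_eq_add {m : ℕ} [NeZero m] (a b : ZMod m → ZMod 2) : a - b = a + b := by
  funext t
  have : ∀ x y : ZMod 2, x - y = x + y := by decide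
  exact this _ _

lemma fun_self_add {m : ℕ} [NeZero m] (a : ZMod m → ZMod 2) : a + a = 0 := by
  funext t
  have : ∀ x : ZMod 2, x + x = 0 := by decide
  exact this _

lemma dist_eq_norm_add {m : ℕ} [NeZero m] (a b : ZMod m → ZMod 2) :
    hammingDist a b = hammingNorm (a + b) := by
  rw [hammingDist_eq_hammingNorm]
  congr 1
  funext t
  have : ∀ x y : ZMod 2, -x + y = x + y := by decide
  exact this _ _

lemma norm_compl {m : ℕ} [NeZero m] (v : ZMod m → ZMod 2) :
    hammingNorm (v + allOne m) + hammingNorm v = m := by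
  classical
  have key : ∀ t : ZMod m, (v + allOne m) t ≠ 0 ↔ ¬ v t ≠ 0 := by
    intro t
    have : ∀ x : ZMod 2, x + 1 ≠ 0 ↔ ¬ x ≠ 0 := by decide
    exact this (v t)
  unfold hammingNorm
  classical
  have h2 := Finset.card_filter_add_card_filter_not
    (s := (Finset.univ : Finset (ZMod m))) (p := fun t => v t ≠ 0)
  have h3 : Finset.filter (fun t => (v + allOne m) t ≠ 0) Finset.univ
      = Finset.filter (fun t => ¬ v t ≠ 0) Finset.univ :=
    Finset.filter_congr (fun t _ => by simpa using key t)
  simp only [Finset.card_univ, ZMod.card] at h2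
  rw [h3]
  omega

lemma shift_zero {m : ℕ} [NeZero m] (g : ZMod m → ZMod 2) : shift m 0 g = g := by
  funext t; simp [shift]

lemma norm_allOne (m : ℕ) [NeZero m] : hammingNorm (allOne m) = m := by
  have := norm_compl (m := m) 0
  simpa using this

/-- the code `C = {g + x^i·g + ξ·u}` arising from a circulant Hadamard
matrix is a Hadamard code: every codeword other than `0` and `u` has Hamming weight
exactly `2n`, and any two distinct codewords are at Hamming distance `2n` or `4n`. -/
theorem circulant_code_is_hadamard (n : ℕ) [NeZero n]
    (g : ZMod (4 * n) → ZMod 2) (hg : IsCircHadGen n g)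
    (C : Set (ZMod (4 * n) → ZMod 2))
    (hC : C = {v | ∃ (i : ZMod (4 * n)) (ξ : ZMod 2),
      v = g + shift (4 * n) i g + ξ • allOne (4 * n)}) :
    (∀ v ∈ C, v ≠ 0 → v ≠ allOne (4 * n) → hammingNorm v = 2 * n) ∧
    (∀ v ∈ C, ∀ w ∈ C, v ≠ w →
      hammingDist v w = 2 * n ∨ hammingDist v w = 4 * n) := by
  subst hC
  have hzm : ∀ x : ZMod 2, x = 0 ∨ x = 1 := by decide
  have hadd1 : ∀ x y : ZMod 2, x ≠ y → x + y = 1 := by decide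
  have hnpos : 0 < n := Nat.pos_of_ne_zero (NeZero.ne n)
  -- norm of g + shift i g for i ≠ 0
  have hkey : ∀ i : ZMod (4 * n), i ≠ 0 → hammingNorm (g + shift (4 * n) i g) = 2 * n := by
    intro i hi
    have := hg 0 i (fun h => hi h.symm)
    rwa [shift_zero, dist_eq_norm_add] at this
  have hkey2 : ∀ i j : ZMod (4 * n), i ≠ j →
      hammingNorm (shift (4 * n) i g + shift (4 * n) j g) = 2 * n := by
    intro i j hij
    have := hg i j hij
    rwa [dist_eq_norm_add] at this
  constructor
  · rintro v ⟨i, ξ, rfl⟩ hv0 hvu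
    rcases hzm ξ with rfl | rfl
    · rw [zero_smul, add_zero]
      rcases eq_or_ne i 0 with rfl | hi
      · exfalso
        apply hv0
        rw [zero_smul, add_zero, shift_zero, fun_self_add]
      · exact hkey i hi
    · rw [one_smul]
      rcases eq_or_ne i 0 with rfl | hi
      · exfalso
        apply hvu
        rw [one_smul, shift_zero, fun_self_add, zero_add]
      · have h1 := norm_compl (g + shift (4 * n) i g)
        rw [hkey i hi] at h1
        omega
  · rintro v ⟨i, ξ, rfl⟩ w ⟨j, ξ', rfl⟩ hvw
    have hdist : hammingDist (g + shift (4 * n) i g + ξ • allOne (4 * n))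
        (g + shift (4 * n) j g + ξ' • allOne (4 * n))
        = hammingNorm (shift (4 * n) i g + shift (4 * n) j g + (ξ + ξ') • allOne (4 * n)) := by
      rw [dist_eq_norm_add]
      congr 1
      have : (g + shift (4 * n) i g + ξ • allOne (4 * n)) +
          (g + shift (4 * n) j g + ξ' • allOne (4 * n))
          = (g + g) + (shift (4 * n) i g + shift (4 * n) j g) +
            (ξ • allOne (4 * n) + ξ' • allOne (4 * n)) := by abel
      rw [this, fun_self_add, zero_add, add_smul]
    rw [hdist]
    rcases eq_or_ne i j with rfl | hij
    · have hξ : ξ ≠ ξ' := by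
        intro h; subst h; exact hvw rfl
      have h1 : ξ + ξ' = 1 := hadd1 _ _ hξ
      rw [h1, fun_self_add, zero_add, one_smul]
      right
      exact norm_allOne (4 * n)
    · rcases eq_or_ne ξ ξ' with rfl | hξ
      · left
        have : ξ + ξ = 0 := by
          rcases hzm ξ with rfl | rfl <;> decide
        rw [this, zero_smul, add_zero]
        exact hkey2 i j hij
      · left
        have h1 : ξ + ξ' = 1 := hadd1 _ _ hξ
        rw [h1, one_smul]
        have h2 := norm_compl (shift (4 * n) i g + shift (4 * n) j g)
        rw [hkey2 i j hij] at h2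
        omega
end

section
/- The map sending each element g + x^i g + ξu of the circulant Hadamard code C to the cyclic shift permutation by i positions gives C a full propelinear structure: for every codeword a = g + x^i g + ξu with associated permutation π_a = shift by i, we have a + π_a(b) ∈ C for all b ∈ C, π_a π_b = π_{a + π_a(b)}, and π_a has no fixed coordinate unless a ∈ {0, u}. -/
/-- assigning to each codeword `a = g + x^i·g + ξ·u` of the circulant
Hadamard code the cyclic shift by `i` positions gives a full propelinear structure:
`a + π_a(b) ∈ C` for all `b ∈ C`, `π_a π_b = π_{a + π_a(b)}` (shifts compose by adding
the indices, and `a * b` is again of the prescribed form with index `i + j`), `π_a`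
has no fixed coordinate unless `a ∈ {0, u}`, and `π_0 = π_u = id`. -/
theorem circulant_code_full_propelinear (n : ℕ) [NeZero n]
    (g : ZMod (4 * n) → ZMod 2) (hg : IsCircHadGen n g)
    (C : Set (ZMod (4 * n) → ZMod 2))
    (hC : C = {v | ∃ (i : ZMod (4 * n)) (ξ : ZMod 2),
      v = g + shift (4 * n) i g + ξ • allOne (4 * n)}) :
    -- (1) closure: a + π_a(b) ∈ C
    (∀ (i : ZMod (4 * n)) (ξ : ZMod 2), ∀ b ∈ C,
      (g + shift (4 * n) i g + ξ • allOne (4 * n)) + shift (4 * n) i b ∈ C) ∧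
    -- (2) π_a π_b = π_{a + π_a(b)}: a * b has shift index i + j
    (∀ (i j : ZMod (4 * n)) (ξ ξ' : ZMod 2),
      (g + shift (4 * n) i g + ξ • allOne (4 * n)) +
          shift (4 * n) i (g + shift (4 * n) j g + ξ' • allOne (4 * n)) =
        g + shift (4 * n) (i + j) g + (ξ + ξ') • allOne (4 * n)) ∧
    (∀ (i j : ZMod (4 * n)) (v : ZMod (4 * n) → ZMod 2),
      shift (4 * n) i (shift (4 * n) j v) = shift (4 * n) (i + j) v) ∧
    -- (3) fullness: π_a is fixed-point-free unless a ∈ {0, u}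
    (∀ (i : ZMod (4 * n)) (ξ : ZMod 2),
      g + shift (4 * n) i g + ξ • allOne (4 * n) ≠ 0 →
      g + shift (4 * n) i g + ξ • allOne (4 * n) ≠ allOne (4 * n) →
      ∀ t : ZMod (4 * n), t - i ≠ t) ∧
    -- π_0 = π_u = id
    (∀ v : ZMod (4 * n) → ZMod 2, shift (4 * n) 0 v = v) := by
  have key : ∀ (i j : ZMod (4 * n)) (ξ ξ' : ZMod 2),
      (g + shift (4 * n) i g + ξ • allOne (4 * n)) +
          shift (4 * n) i (g + shift (4 * n) j g + ξ' • allOne (4 * n)) =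
        g + shift (4 * n) (i + j) g + (ξ + ξ') • allOne (4 * n) := by
    intro i j ξ ξ'
    funext t
    simp only [shift, allOne, Pi.add_apply, Pi.smul_apply, smul_eq_mul, mul_one, sub_sub]
    ring_nf
    simp only [show (2:ZMod 2) = 0 from rfl, mul_zero, add_zero]
  refine ⟨?_, key, ?_, ?_, ?_⟩
  · intro i ξ b hb
    rw [hC] at hb ⊢
    obtain ⟨j, ξ', rfl⟩ := hb
    exact ⟨i + j, ξ + ξ', key i j ξ ξ'⟩
  · intro i j v
    funext t
    simp only [shift, sub_sub]
  · intro i ξ h0 hu t ht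
    have hi : i = 0 := by
      have := sub_eq_self.mp ht
      simpa using this
    subst hi
    have hsh : shift (4 * n) 0 g = g := by
      funext t; simp [shift]
    rcases (by decide : ∀ x : ZMod 2, x = 0 ∨ x = 1) ξ with h | h
    · apply h0
      rw [hsh, h]
      funext s
      simp [allOne, CharTwo.add_self_eq_zero]
    · apply hu
      rw [hsh, h]
      funext s
      simp [allOne, CharTwo.add_self_eq_zero]
  · intro v
    funext t
    simp [shift]
end

section
/- Let C = ⟨a, u⟩ be a Hadamard full propelinear code of type C_{4n} × C₂ (arising from a circulant Hadamard matrix). Then the all-ones vector u lies in the F₂-linear span of {a, a², ..., a^{4n−1}}; in fact the sum a + a² + ... + a^{4n−1} equals u. -/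
section Aux

variable (n : ℕ) [NeZero n]

/-- reindexing a sum over `range m` as a sum over `ZMod m`. -/
lemma sum_range_zmod (m : ℕ) [NeZero m] (f : ZMod m → ZMod 2) :
    ∑ i ∈ Finset.range m, f (i : ZMod m) = ∑ s : ZMod m, f s := by
  refine Finset.sum_nbij' (fun i => ((i : ZMod m))) (fun s => s.val) ?_ ?_ ?_ ?_ ?_ <;>
    simp [ZMod.val_lt, ZMod.natCast_val]
  intro a ha; exact Nat.mod_eq_of_lt ha

/-- The weight of `g` is odd. -/
lemma weight_odd (hodd : Odd n) (g : ZMod (4 * n) → ZMod 2) (hg : IsCircHadGen n g) :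
    Odd (Finset.univ.filter (fun t => g t = 1)).card := by
  obtain ⟨w, hw⟩ : ∃ w, (Finset.univ.filter (fun t => g t = 1)).card = w := ⟨_, rfl⟩
  rw [hw]
  have hwle : w ≤ 4 * n := by
    rw [← hw]
    calc (Finset.univ.filter (fun t => g t = 1)).card
        ≤ Fintype.card (ZMod (4 * n)) := Finset.card_filter_le _ _
    _ = 4 * n := ZMod.card _
  have h0 : shift (4 * n) 0 g = g := funext fun t => by simp [shift]
  have hcompl : (Finset.univ.filter (fun s => ¬ g s = 1)).card = 4 * n - w := by
    have := Finset.card_filter_add_card_filter_not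
      (s := (Finset.univ : Finset (ZMod (4 * n)))) (p := fun s => g s = 1)
    rw [Finset.card_univ, ZMod.card, hw] at this
    omega
  -- sum of distances
  have hsum : ∑ j ∈ Finset.univ.erase (0 : ZMod (4 * n)), ((Finset.univ.filter
      (fun t => g t ≠ g (t - j))).card) = (4 * n - 1) * (2 * n) := by
    have h1 : ∀ j ∈ Finset.univ.erase (0 : ZMod (4 * n)),
        (Finset.univ.filter (fun t => g t ≠ g (t - j))).card = 2 * n := by
      intro j hj
      have hj0 : (0 : ZMod (4 * n)) ≠ j := (Finset.ne_of_mem_erase hj).symm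
      have h2 := hg 0 j hj0
      rw [h0] at h2
      rw [hammingDist] at h2
      convert h2 using 2
      ext t; rw [Finset.mem_filter, Finset.mem_filter]; simp [shift]
    rw [Finset.sum_congr rfl h1, Finset.sum_const, smul_eq_mul]
    congr 1
    rw [Finset.card_erase_of_mem (Finset.mem_univ _), Finset.card_univ, ZMod.card]
  -- swap the double count
  have hswap : ∑ j ∈ Finset.univ.erase (0 : ZMod (4 * n)), ((Finset.univ.filter
      (fun t => g t ≠ g (t - j))).card)
      = ∑ t : ZMod (4 * n), ((Finset.univ.erase t).filter (fun s => g t ≠ g s)).card := by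
    simp only [Finset.card_filter]
    rw [Finset.sum_comm]
    refine Finset.sum_congr rfl fun t _ => ?_
    refine Finset.sum_nbij' (fun j => t - j) (fun s => t - s) ?_ ?_ ?_ ?_ ?_ <;>
      simp +contextual [sub_eq_iff_eq_add, sub_sub_cancel, sub_eq_self, eq_comm]
    intro a ha
    exact fun h => ha (by rwa [eq_comm, sub_eq_self] at h)
  -- evaluate the inner count
  have hinner : ∀ t : ZMod (4 * n),
      ((Finset.univ.erase t).filter (fun s => g t ≠ g s)).card
        = if g t = 1 then 4 * n - w else w := by
    intro t
    by_cases ht : g t = 1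
    · rw [if_pos ht]
      have hpred : ∀ s : ZMod (4 * n), (g t ≠ g s) ↔ ¬ g s = 1 := by
        intro s; rw [ht]; constructor <;> intro h <;> exact fun h' => h h'.symm
      rw [Finset.filter_erase, Finset.erase_eq_of_notMem, ← hcompl]
      · congr 1; ext s; simp [hpred]
      · simp [ht]
    · rw [if_neg ht]
      have ht0 : g t = 0 := by
        have h3 : ∀ x : ZMod 2, ¬ x = 1 → x = 0 := by decide
        exact h3 _ ht
      have hpred : ∀ s : ZMod (4 * n), (g t ≠ g s) ↔ g s = 1 := by
        intro s; rw [ht0]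
        have h4 : ∀ x : ZMod 2, ((0 : ZMod 2) ≠ x) ↔ x = 1 := by decide
        exact h4 _
      rw [Finset.filter_erase, Finset.erase_eq_of_notMem, ← hw]
      · congr 1; ext s; simp [hpred]
      · simp [ht]
  have hcount : w * (4 * n - w) + (4 * n - w) * w = (4 * n - 1) * (2 * n) := by
    rw [← hsum, hswap, Finset.sum_congr rfl (fun t _ => hinner t), Finset.sum_ite,
      Finset.sum_const, Finset.sum_const, smul_eq_mul, smul_eq_mul, hw, hcompl]
  have key : w * (4 * n - w) = (4 * n - 1) * n := by
    rw [Nat.mul_comm (4 * n - w) w, ← Nat.two_mul,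
      show (4 * n - 1) * (2 * n) = 2 * ((4 * n - 1) * n) by ring] at hcount
    exact Nat.eq_of_mul_eq_mul_left (by norm_num) hcount
  have hn1 : 1 ≤ n := Nat.one_le_iff_ne_zero.mpr (NeZero.ne n)
  have hmn : Odd ((4 * n - 1) * n) := Odd.mul ⟨2 * n - 1, by omega⟩ hodd
  rw [← key] at hmn
  exact (Nat.odd_mul.mp hmn).1

end Aux

/-- in the HFP-code `C = ⟨a, u⟩` of type `C_{4n} × C₂` arising from a
circulant Hadamard matrix with generator polynomial `g` (so `a^i = (1+x^i)·g`, and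
`n` is an odd square), the all-ones vector `u` lies in the linear span of
`{a, a², …, a^{4n−1}}`; in fact `a + a² + ⋯ + a^{4n−1} = u`. -/
theorem sum_of_powers_eq_allOne (n : ℕ) [NeZero n] (hodd : Odd n)
    (g : ZMod (4 * n) → ZMod 2) (hg : IsCircHadGen n g) :
    (∑ i ∈ Finset.Ico 1 (4 * n), (g + shift (4 * n) (i : ZMod (4 * n)) g))
        = allOne (4 * n) ∧
      allOne (4 * n) ∈ Submodule.span (ZMod 2)
        {v : ZMod (4 * n) → ZMod 2 | ∃ i : ZMod (4 * n), v = g + shift (4 * n) i g} := by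
  have hm0 : 0 < 4 * n := Nat.pos_of_ne_zero (NeZero.ne _)
  have hS : ∑ s : ZMod (4 * n), g s = 1 := by
    have hodd' := weight_odd n hodd g hg
    have h1 : ∀ x : ZMod 2, x = if x = 1 then 1 else 0 := by decide
    calc ∑ s : ZMod (4 * n), g s
        = ∑ s : ZMod (4 * n), (if g s = 1 then (1 : ZMod 2) else 0) :=
          Finset.sum_congr rfl fun s _ => h1 (g s)
      _ = ((Finset.univ.filter fun s => g s = 1).card : ZMod 2) := by
          rw [Finset.sum_boole]
      _ = 1 := by
          obtain ⟨k, hk⟩ := hodd'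
          rw [hk]; push_cast; rw [show (2 : ZMod 2) = 0 by decide]; ring
  have hmain : (∑ i ∈ Finset.Ico 1 (4 * n), (g + shift (4 * n) (i : ZMod (4 * n)) g))
      = allOne (4 * n) := by
    funext t
    rw [Finset.sum_apply]
    simp only [Pi.add_apply]
    have hfull : ∑ i ∈ Finset.range (4 * n), g (t - (i : ZMod (4 * n))) = 1 := by
      rw [sum_range_zmod (4 * n) (fun s => g (t - s)),
        Fintype.sum_equiv (Equiv.subLeft t) (fun s => g (t - s)) g (fun x => by simp)]
      exact hS
    rw [Finset.range_eq_Ico, Finset.sum_eq_sum_Ico_succ_bot hm0] at hfull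
    have hx : ∑ i ∈ Finset.Ico 1 (4 * n), g (t - (i : ZMod (4 * n))) = 1 - g t := by
      rw [eq_sub_iff_add_eq, add_comm]
      simpa using hfull
    have hcast : ((4 * n - 1 : ℕ) : ZMod 2) = 1 := by
      obtain ⟨k, hk⟩ := hodd
      have : 4 * n - 1 = 2 * (4 * k + 1) + 1 := by omega
      rw [this]; push_cast; rw [show (2 : ZMod 2) = 0 by decide]; ring
    simp only [shift, allOne]
    rw [Finset.sum_add_distrib, hx, Finset.sum_const, Nat.card_Ico,
      nsmul_eq_mul, hcast]
    ring
  refine ⟨hmain, ?_⟩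
  rw [← hmain]
  exact Submodule.sum_mem _ fun i _ =>
    Submodule.subset_span ⟨(i : ZMod (4 * n)), rfl⟩
end

section
/- Let C be a Hadamard code of length 4n = 2^s·n' with n' odd, containing the zero vector. If C is nonlinear, then the dimension k of its kernel satisfies 1 ≤ k ≤ s − 1. -/
lemma zmodfun_add_self {ι : Type} (y : ι → ZMod 2) : y + y = 0 := by
  funext i
  have : ∀ a : ZMod 2, a + a = 0 := by decide
  exact this _

lemma zmodfun_eq_of_add_eq_zero {ι : Type} (x y : ι → ZMod 2) (h : x + y = 0) : y = x := by
  rw [← zero_add y, ← zmodfun_add_self x, add_assoc, h, add_zero]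

lemma hammingNorm_add_eq_dist {ι : Type} [Fintype ι] [DecidableEq ι] (u v : ι → ZMod 2) :
    hammingNorm (u + v) = hammingDist u v := by
  unfold hammingNorm hammingDist
  congr 1
  apply Finset.filter_congr
  intro i _
  have : ∀ a b : ZMod 2, (a + b ≠ 0) ↔ a ≠ b := by decide
  exact this (u i) (v i)

lemma aux_div {ι : Type} [Fintype ι] [DecidableEq ι] (N : Submodule (ZMod 2) (ι → ZMod 2))
    (r w : ℕ) (hcard : Nat.card N = 2 ^ (r + 1))
    (hw : ∀ x ∈ N, x ≠ 0 → hammingNorm x = w) : 2 ^ r ∣ w := by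
  classical
  obtain ⟨S, hmem⟩ : ∃ S : Finset (ι → ZMod 2), ∀ x, x ∈ S ↔ x ∈ N :=
    ⟨(N : Set (ι → ZMod 2)).toFinite.toFinset, fun x => Set.Finite.mem_toFinset _⟩
  have hScard : S.card = 2 ^ (r + 1) := by
    rw [← hcard]
    have hSset : (S : Set (ι → ZMod 2)) = (N : Set (ι → ZMod 2)) := by
      ext x; simp [hmem]
    rw [← Set.ncard_coe_finset, hSset, ← Nat.card_coe_set_eq]
    rfl
  have h0S : (0 : ι → ZMod 2) ∈ S := (hmem 0).mpr N.zero_mem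
  have haddS : ∀ x ∈ S, ∀ y ∈ S, x + y ∈ S := fun x hx y hy =>
    (hmem _).mpr (N.add_mem ((hmem x).mp hx) ((hmem y).mp hy))
  have htotal : ∑ x ∈ S, hammingNorm x = (2 ^ (r + 1) - 1) * w := by
    have hconst : ∀ x ∈ S.erase 0, hammingNorm x = w := fun x hx =>
      hw x ((hmem x).mp (Finset.mem_of_mem_erase hx)) (Finset.ne_of_mem_erase hx)
    calc ∑ x ∈ S, hammingNorm x
        = ∑ x ∈ S.erase 0, hammingNorm x + hammingNorm (0 : ι → ZMod 2) :=
          (Finset.sum_erase_add _ _ h0S).symm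
      _ = (S.erase 0).card * w := by
          rw [Finset.sum_congr rfl hconst, hammingNorm_zero, add_zero, Finset.sum_const,
            smul_eq_mul]
      _ = (2 ^ (r + 1) - 1) * w := by rw [Finset.card_erase_of_mem h0S, hScard]
  have hsplit : ∑ x ∈ S, hammingNorm x = ∑ i : ι, (S.filter (fun x => x i ≠ 0)).card := by
    simp only [hammingNorm, Finset.card_filter]
    exact Finset.sum_comm
  have hdvd_i : ∀ i : ι, 2 ^ r ∣ (S.filter (fun x => x i ≠ 0)).card := by
    intro i
    by_cases hex : ∃ x0 ∈ S, x0 i ≠ 0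
    · obtain ⟨x0, hx0S, hx0i⟩ := hex
      have key : ∀ x : ι → ZMod 2, (x + x0) + x0 = x := by
        intro x; rw [add_assoc, zmodfun_add_self, add_zero]
      have hbij : (S.filter (fun x => x i = 0)).card = (S.filter (fun x => x i ≠ 0)).card := by
        apply Finset.card_bij' (i := fun x _ => x + x0) (j := fun x _ => x + x0)
        · intro a ha
          rw [Finset.mem_filter] at ha ⊢
          refine ⟨haddS _ ha.1 _ hx0S, ?_⟩
          have : (a + x0) i = a i + x0 i := rfl
          rw [this, ha.2, zero_add]
          exact hx0i
        · intro b hb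
          rw [Finset.mem_filter] at hb ⊢
          refine ⟨haddS _ hb.1 _ hx0S, ?_⟩
          have h2 : (b + x0) i = b i + x0 i := rfl
          rw [h2]
          have : ∀ a b : ZMod 2, a ≠ 0 → b ≠ 0 → a + b = 0 := by decide
          exact this _ _ hb.2 hx0i
        · intro a _; exact key a
        · intro b _; exact key b
      have hpart := Finset.card_filter_add_card_filter_not (s := S)
        (p := fun x => x i = 0)
      have hpart' : (S.filter (fun x => x i = 0)).card
          + (S.filter (fun x => x i ≠ 0)).card = 2 ^ (r + 1) := by
        rw [← hScard, ← hpart]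
      rw [hbij, ← two_mul, pow_succ, mul_comm (2 ^ r) 2] at hpart'
      have : (S.filter (fun x => x i ≠ 0)).card = 2 ^ r :=
        Nat.eq_of_mul_eq_mul_left two_pos hpart'
      rw [this]
    · push_neg at hex
      have : S.filter (fun x => x i ≠ 0) = ∅ := by
        apply Finset.filter_eq_empty_iff.mpr
        intro x hx
        simp [hex x hx]
      rw [this]
      simp
  have hdvd : 2 ^ r ∣ (2 ^ (r + 1) - 1) * w := by
    rw [← htotal, hsplit]
    exact Finset.dvd_sum (fun i _ => hdvd_i i)
  have hodd : Odd (2 ^ (r + 1) - 1) :=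
    Nat.Even.sub_odd Nat.one_le_two_pow
      (Nat.even_pow.mpr ⟨even_two, Nat.succ_ne_zero r⟩) odd_one
  have hcop : Nat.Coprime (2 ^ r) (2 ^ (r + 1) - 1) :=
    Nat.Coprime.pow_left _ (Nat.coprime_two_left.mpr hodd)
  exact hcop.dvd_of_dvd_mul_left hdvd


/-- `C` is a binary Hadamard code of length `m` on the coordinate set `ι`:
it consists of the rows of a normalized binary Hadamard matrix and their
complements, i.e. it contains `0`, is closed under complementation, has `2m`
codewords, and any two distinct non-complementary codewords are at distance `m/2`. -/
def IsHadamardCodeLen (ι : Type) [Fintype ι] [DecidableEq ι] (m : ℕ)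
    (C : Set (ι → ZMod 2)) : Prop :=
  Fintype.card ι = m ∧ (0 : ι → ZMod 2) ∈ C ∧
    (∀ v ∈ C, (v + fun _ => 1) ∈ C) ∧ C.ncard = 2 * m ∧
    ∀ v ∈ C, ∀ w ∈ C, v ≠ w → v ≠ w + (fun _ => 1) → 2 * hammingDist v w = m

/-- a nonlinear Hadamard code of length `4n = 2^s·n'` with `n'` odd
has kernel of dimension `k` with `1 ≤ k ≤ s − 1`. -/
theorem hadamard_kernel_dim_bounds (n s n' : ℕ) (hn' : Odd n')
    (hlen : 4 * n = 2 ^ s * n')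
    (C : Set (Fin (4 * n) → ZMod 2))
    (hC : IsHadamardCodeLen (Fin (4 * n)) (4 * n) C)
    (hnl : ¬ ∃ W : Submodule (ZMod 2) (Fin (4 * n) → ZMod 2), (W : Set _) = C) :
    1 ≤ Module.finrank (ZMod 2) (Submodule.span (ZMod 2) (kernelOf C)) ∧
      Module.finrank (ZMod 2) (Submodule.span (ZMod 2) (kernelOf C)) ≤ s - 1 := by

  classical
  obtain ⟨hcard, h0C, hcompl, hncard, hdist⟩ := hC
  set one : Fin (4 * n) → ZMod 2 := (fun _ => 1) with hone
  -- n positive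
  have hfinC : C.Finite := Set.toFinite C
  have hn : 0 < n := by
    rcases Nat.eq_zero_or_pos n with h | h
    · subst h
      have : C = ∅ := (Set.ncard_eq_zero hfinC).mp (by simpa using hncard)
      rw [this] at h0C
      exact absurd h0C (Set.notMem_empty 0)
    · exact h
  -- kernel basic facts
  have hKC : kernelOf C ⊆ C := by
    intro x hx
    have : x + 0 ∈ (fun v => x + v) '' C := Set.mem_image_of_mem _ h0C
    rw [hx] at this
    simpa using this
  have hKact : ∀ x ∈ kernelOf C, ∀ v ∈ C, x + v ∈ C := by
    intro x hx v hv
    have : x + v ∈ (fun v => x + v) '' C := Set.mem_image_of_mem _ hv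
    rwa [hx] at this
  have hmemK : ∀ x : Fin (4 * n) → ZMod 2, (∀ v ∈ C, x + v ∈ C) → x ∈ kernelOf C := by
    intro x hx
    have hsub : (fun v => x + v) '' C ⊆ C := by
      rintro _ ⟨v, hv, rfl⟩; exact hx v hv
    have hinj : Function.Injective (fun v : Fin (4 * n) → ZMod 2 => x + v) := fun a b h => by
      simpa using congrArg (fun z => x + z) h
    exact Set.eq_of_subset_of_ncard_le hsub
      (by rw [Set.ncard_image_of_injective C hinj]) hfinC
  have h0K : (0 : Fin (4 * n) → ZMod 2) ∈ kernelOf C := by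
    simp [kernelOf]
  have h1K : one ∈ kernelOf C := by
    apply hmemK
    intro v hv
    have := hcompl v hv
    rwa [add_comm] at this
  have haddK : ∀ x ∈ kernelOf C, ∀ y ∈ kernelOf C, x + y ∈ kernelOf C := by
    intro x hx y hy
    show (fun v => (x + y) + v) '' C = C
    have : (fun v : Fin (4 * n) → ZMod 2 => (x + y) + v) = (fun v => x + v) ∘ (fun v => y + v) := by
      funext v; simp [add_assoc]
    rw [this, Set.image_comp, hy, hx]
  have hzmod : ∀ a : ZMod 2, a = 0 ∨ a = 1 := by decide
  have hsmulK : ∀ (a : ZMod 2) (x : Fin (4 * n) → ZMod 2), x ∈ kernelOf C →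
      a • x ∈ kernelOf C := by
    intro a x hx
    rcases hzmod a with rfl | rfl
    · rw [zero_smul]; exact h0K
    · rw [one_smul]; exact hx
  -- the kernel as a submodule
  set Ksub : Submodule (ZMod 2) (Fin (4 * n) → ZMod 2) :=
    { carrier := kernelOf C
      add_mem' := fun hx hy => haddK _ hx _ hy
      zero_mem' := h0K
      smul_mem' := fun a x hx => hsmulK a x hx } with hKsub
  have hKsubmem : ∀ x, x ∈ Ksub ↔ x ∈ kernelOf C := fun x => Iff.rfl
  have hspan : Submodule.span (ZMod 2) (kernelOf C) = Ksub := by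
    rw [show kernelOf C = (Ksub : Set (Fin (4 * n) → ZMod 2)) from rfl]
    exact Submodule.span_eq Ksub
  set k := Module.finrank (ZMod 2) Ksub with hk
  -- 1 ≠ 0
  have hone_ne : one ≠ 0 := by
    intro h
    have := congrFun h ⟨0, by omega⟩
    simp [hone] at this
  -- c exists
  have hKneC : kernelOf C ≠ C := by
    intro h
    exact hnl ⟨Ksub, by rw [show (Ksub : Set (Fin (4 * n) → ZMod 2)) = kernelOf C from rfl, h]⟩
  obtain ⟨c, hcC, hcK⟩ : ∃ c ∈ C, c ∉ kernelOf C := by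
    by_contra h
    push_neg at h
    exact hKneC (Set.Subset.antisymm hKC h)
  obtain ⟨d, hdC, hcd⟩ : ∃ d ∈ C, c + d ∉ C := by
    by_contra h
    push_neg at h
    exact hcK (hmemK c h)
  have hcdK : c + d ∉ kernelOf C := fun h => hcd (hKC h)
  have hdK : d ∉ kernelOf C := by
    intro h
    exact hcd (by rw [add_comm]; exact hKact d h c hcC)
  -- weight of nonzero, non-complement codewords
  have hwA : ∀ u ∈ C, u ≠ 0 → u ≠ one → hammingNorm u = 2 * n := by
    intro u hu hne0 hne1
    have h2 := hdist u hu 0 h0C hne0 (by rwa [zero_add])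
    rw [hammingDist_zero_right] at h2
    omega
  -- the subspace W = Ksub + <c,d>
  set Wsub : Submodule (ZMod 2) (Fin (4 * n) → ZMod 2) :=
    Ksub ⊔ Submodule.span (ZMod 2) {c, d} with hWsub
  have hWmem : ∀ w, w ∈ Wsub ↔
      ∃ a ∈ kernelOf C, ∃ ε δ : ZMod 2, w = a + ε • c + δ • d := by
    intro w
    rw [hWsub, Submodule.mem_sup]
    constructor
    · rintro ⟨a, ha, z, hz, rfl⟩
      obtain ⟨ε, δ, rfl⟩ := Submodule.mem_span_pair.mp hz
      exact ⟨a, ha, ε, δ, by rw [add_assoc]⟩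
    · rintro ⟨a, ha, ε, δ, rfl⟩
      exact ⟨a, ha, ε • c + δ • d, Submodule.mem_span_pair.mpr ⟨ε, δ, rfl⟩, by rw [add_assoc]⟩
  -- all elements of W except 0 and one have weight 2n
  have hwB : ∀ x, x ∈ Wsub → x ≠ 0 → x ≠ one → hammingNorm x = 2 * n := by
    intro x hx hne0 hne1
    obtain ⟨a, ha, ε, δ, rfl⟩ := (hWmem _).mp hx
    rcases hzmod ε with rfl | rfl <;> rcases hzmod δ with rfl | rfl
    · rw [zero_smul, zero_smul, add_zero, add_zero] at *
      exact hwA a (hKC ha) hne0 hne1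
    · rw [zero_smul, one_smul, add_zero] at *
      exact hwA _ (hKact a ha d hdC) hne0 hne1
    · rw [one_smul, zero_smul, add_zero] at *
      exact hwA _ (hKact a ha c hcC) hne0 hne1
    · rw [one_smul, one_smul] at *
      have habc : ∀ x y : Fin (4 * n) → ZMod 2, x + (y + x) = y := by
        intro x y; rw [add_comm y x, ← add_assoc, zmodfun_add_self, zero_add]
      have hac : a + c ∈ C := hKact a ha c hcC
      have hne : a + c ≠ d := by
        intro h
        apply hcdK
        have : c + d = a := by rw [← h]; exact habc c a
        rw [this]; exact ha
      have hne' : a + c ≠ d + one := by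
        intro h
        apply hcdK
        have hd : (a + c) + one = d := by rw [h, add_assoc, zmodfun_add_self, add_zero]
        have : c + d = a + one := by rw [← hd, ← add_assoc, habc c a]
        rw [this]
        exact haddK a ha one h1K
      have h2 := hdist (a + c) hac d hdC hne hne'
      rw [← hammingNorm_add_eq_dist] at h2
      omega
  -- the parametrization of W
  set g : (Ksub × (ZMod 2 × ZMod 2)) →ₗ[ZMod 2] (Fin (4 * n) → ZMod 2) :=
    Ksub.subtype ∘ₗ LinearMap.fst (ZMod 2) _ _
      + (LinearMap.toSpanSingleton (ZMod 2) _ c) ∘ₗ (LinearMap.fst (ZMod 2) (ZMod 2) (ZMod 2))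
          ∘ₗ (LinearMap.snd (ZMod 2) _ _)
      + (LinearMap.toSpanSingleton (ZMod 2) _ d) ∘ₗ (LinearMap.snd (ZMod 2) (ZMod 2) (ZMod 2))
          ∘ₗ (LinearMap.snd (ZMod 2) _ _) with hg
  have hgapply : ∀ p : Ksub × (ZMod 2 × ZMod 2),
      g p = (p.1 : Fin (4 * n) → ZMod 2) + p.2.1 • c + p.2.2 • d := fun p => rfl
  have hginj : Function.Injective g := by
    rw [← LinearMap.ker_eq_bot, Submodule.eq_bot_iff]
    rintro ⟨a, ε, δ⟩ hp
    rw [LinearMap.mem_ker, hgapply] at hp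
    simp only at hp
    rcases hzmod ε with rfl | rfl <;> rcases hzmod δ with rfl | rfl
    · rw [zero_smul, zero_smul, add_zero, add_zero] at hp
      have : a = 0 := Subtype.ext hp
      rw [this]; rfl
    · rw [zero_smul, one_smul, add_zero] at hp
      exact absurd ((zmodfun_eq_of_add_eq_zero _ _ hp) ▸ a.2 : d ∈ kernelOf C) hdK
    · rw [one_smul, zero_smul, add_zero] at hp
      exact absurd ((zmodfun_eq_of_add_eq_zero _ _ hp) ▸ a.2 : c ∈ kernelOf C) hcK
    · rw [one_smul, one_smul, add_assoc] at hp
      exact absurd ((zmodfun_eq_of_add_eq_zero _ _ hp) ▸ a.2 : c + d ∈ kernelOf C) hcdK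
  have hgrange : LinearMap.range g = Wsub := by
    apply le_antisymm
    · rintro _ ⟨p, rfl⟩
      exact (hWmem _).mpr ⟨p.1, p.1.2, p.2.1, p.2.2, hgapply p⟩
    · intro w hw
      obtain ⟨a, ha, ε, δ, rfl⟩ := (hWmem w).mp hw
      exact ⟨(⟨a, ha⟩, (ε, δ)), rfl⟩
  have e := (LinearEquiv.ofInjective g hginj).trans (LinearEquiv.ofEq _ _ hgrange)
  have hfinW : Module.finrank (ZMod 2) Wsub = k + 2 := by
    rw [← LinearEquiv.finrank_eq e, Module.finrank_prod, Module.finrank_prod,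
      Module.finrank_self]
  -- the hyperplane section of W avoiding `one`
  set i0 : Fin (4 * n) := ⟨0, by omega⟩ with hi0
  set φ : Wsub →ₗ[ZMod 2] ZMod 2 := (LinearMap.proj i0) ∘ₗ Wsub.subtype with hφ
  have h1W : one ∈ Wsub := Submodule.mem_sup_left h1K
  have hφsurj : Function.Surjective φ := by
    intro z
    rcases hzmod z with rfl | rfl
    · exact ⟨0, map_zero φ⟩
    · exact ⟨⟨one, h1W⟩, rfl⟩
  have hrange : LinearMap.range φ = ⊤ := LinearMap.range_eq_top.mpr hφsurj
  have hrank := LinearMap.finrank_range_add_finrank_ker φ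
  rw [hrange, finrank_top, Module.finrank_self, hfinW] at hrank
  have hfinker : Module.finrank (ZMod 2) (LinearMap.ker φ) = k + 1 := by omega
  set N : Submodule (ZMod 2) (Fin (4 * n) → ZMod 2) :=
    (LinearMap.ker φ).map Wsub.subtype with hNdef
  have hfinN : Module.finrank (ZMod 2) N = k + 1 := by
    rw [hNdef, Submodule.finrank_map_subtype_eq]; exact hfinker
  have hcardN : Nat.card N = 2 ^ (k + 1) := by
    letI : Fintype N := Fintype.ofFinite N
    rw [Nat.card_eq_fintype_card, Module.card_eq_pow_finrank (K := ZMod 2), hfinN, ZMod.card]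
  have hwN : ∀ x ∈ N, x ≠ 0 → hammingNorm x = 2 * n := by
    intro x hx hne0
    rw [hNdef, Submodule.mem_map] at hx
    obtain ⟨y, hy, rfl⟩ := hx
    have hyW : (y : Fin (4 * n) → ZMod 2) ∈ Wsub := y.2
    have hyi0 : (y : Fin (4 * n) → ZMod 2) i0 = 0 := hy
    apply hwB _ hyW hne0
    intro h1
    rw [h1] at hyi0
    simp [hone] at hyi0
  have hdvd2n : 2 ^ k ∣ 2 * n := aux_div N k (2 * n) hcardN hwN
  have hdvd4n : 2 ^ (k + 1) ∣ 4 * n := by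
    obtain ⟨m, hm⟩ := hdvd2n
    refine ⟨m, ?_⟩
    rw [pow_succ]
    calc 4 * n = 2 * (2 * n) := by ring
    _ = 2 * (2 ^ k * m) := by rw [hm]
    _ = 2 ^ k * 2 * m := by ring
  have hdvds : 2 ^ (k + 1) ∣ 2 ^ s := by
    rw [hlen] at hdvd4n
    exact Nat.Coprime.dvd_of_dvd_mul_right
      (Nat.Coprime.pow_left _ (Nat.coprime_two_left.mpr hn')) hdvd4n
  have hks : k + 1 ≤ s := (Nat.pow_dvd_pow_iff_le_right one_lt_two).mp hdvds
  have hpos : 0 < k := by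
    have hnt : Nontrivial Ksub :=
      ⟨⟨0, ⟨one, h1K⟩, fun h => hone_ne (congrArg Subtype.val h).symm⟩⟩
    rw [hk]
    exact Module.finrank_pos
  rw [hspan]
  exact ⟨hpos, by omega⟩
end

section
/- Let C be a nonlinear Hadamard code of length 4n with nontrivial kernel, and let κ ∈ K(C) with κ ∉ {0, u}. Then the projection of C onto the support of κ (restricting codewords to the coordinates where κ is 1) is a Hadamard code of length 2n. -/
open Finset

private lemma zmod2_ne {a b : ZMod 2} : a ≠ b ↔ b = a + 1 := by revert a b; decide

private lemma zmod2_a11 (a : ZMod 2) : a + 1 + 1 = a := by revert a; decide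

private lemma zmod2_a2 (a : ZMod 2) : a + (1 + 1) = a := by revert a; decide

private lemma zmod2_add_one_ne (a : ZMod 2) : a + 1 ≠ a := by revert a; decide

private lemma zmod2_eq_one_of (a : ZMod 2) (h : a + 1 = 0) : a = 1 := by revert h; revert a; decide

private lemma zmod2_flip (a b : ZMod 2) : a ≠ b + 1 ↔ ¬ (a ≠ b) := by revert a b; decide

private lemma zmod2_one {a : ZMod 2} (h : a ≠ 0) : a = 1 := by revert h; revert a; decide

private def subEquiv {α : Type} (p q : α → Prop) :
    {i : {i // p i} // q i.1} ≃ {i : α // q i ∧ p i} where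
  toFun x := ⟨x.1.1, x.2, x.1.2⟩
  invFun x := ⟨⟨x.1, x.2.2⟩, x.2.1⟩
  left_inv _ := rfl
  right_inv _ := rfl

private lemma card_filter_sub {α : Type} [Fintype α] (p q : α → Prop)
    [DecidablePred p] [DecidablePred q] :
    (univ.filter fun i : {i // p i} => q i.1).card =
      (univ.filter fun i : α => q i ∧ p i).card := by
  rw [← Fintype.card_subtype, ← Fintype.card_subtype]
  exact Fintype.card_congr (subEquiv p q)

/-- if `C` is a nonlinear Hadamard code of length `4n` with
nontrivial kernel and `κ ∈ K(C) \ {0, u}`, then the projection of `C` onto the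
support of `κ` is a Hadamard code of length `2n`. -/
theorem hadamard_projection_on_kernel_support (n : ℕ)
    (C : Set (Fin (4 * n) → ZMod 2))
    (hC : IsHadamardCodeLen (Fin (4 * n)) (4 * n) C)
    (hnl : ¬ ∃ W : Submodule (ZMod 2) (Fin (4 * n) → ZMod 2), (W : Set _) = C)
    (κ : Fin (4 * n) → ZMod 2) (hκ : κ ∈ kernelOf C)
    (hκ0 : κ ≠ 0) (hκu : κ ≠ fun _ => 1) :
    IsHadamardCodeLen {i : Fin (4 * n) // κ i ≠ 0} (2 * n)
      ((fun v (i : {i : Fin (4 * n) // κ i ≠ 0}) => v i.1) '' C) := by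
  obtain ⟨hcard, h0, hcompl, hnc, hdist⟩ := hC
  set u : Fin (4 * n) → ZMod 2 := fun _ => 1 with hu
  set π : (Fin (4 * n) → ZMod 2) → ({i : Fin (4 * n) // κ i ≠ 0} → ZMod 2) :=
    fun v i => v i.1 with hπ
  -- basic kernel facts
  have hK : ∀ v ∈ C, κ + v ∈ C := by
    intro v hv
    have h1 : (fun v => κ + v) '' C = C := hκ
    rw [← h1]; exact ⟨v, hv, rfl⟩
  have hκC : κ ∈ C := by
    have := hK 0 h0; simpa using this
  have hκw : hammingDist κ 0 = 2 * n := by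
    have := hdist κ hκC 0 h0 hκ0 (by simpa using hκu)
    omega
  have hsuppcard : (univ.filter fun i : Fin (4 * n) => κ i ≠ 0).card = 2 * n := by
    have : (univ.filter fun i : Fin (4 * n) => κ i ≠ 0).card = hammingDist κ 0 := by
      simp [hammingDist]
    omega
  have hS : Fintype.card {i : Fin (4 * n) // κ i ≠ 0} = 2 * n := by
    rw [Fintype.card_subtype]; exact hsuppcard
  -- complement of support
  have hcosuppcard : (univ.filter fun i : Fin (4 * n) => ¬ κ i ≠ 0).card = 2 * n := by
    have := Finset.card_filter_add_card_filter_not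
      (s := (univ : Finset (Fin (4 * n)))) (p := fun i => κ i ≠ 0)
    rw [card_univ, hcard] at this
    omega
  have hκuC : κ + u ≠ 0 := by
    intro h
    apply hκu
    funext i
    have := congrFun h i
    simp only [Pi.add_apply, Pi.zero_apply, hu] at this
    exact zmod2_eq_one_of _ this
  have hKu : ∀ v ∈ C, v + (κ + u) ∈ C := by
    intro v hv
    have h1 := hK (v + u) (hcompl v hv)
    have h2 : v + (κ + u) = κ + (v + u) := by ring
    rwa [h2]
  have hπu : ∀ v : Fin (4 * n) → ZMod 2, π (v + u) = π v + fun _ => 1 := fun v => rfl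
  have hπκu : ∀ v : Fin (4 * n) → ZMod 2, π (v + (κ + u)) = π v := by
    intro v; funext i
    show v i.1 + (κ i.1 + 1) = v i.1
    rw [zmod2_one i.2]
    exact zmod2_a2 _
  have hπκ : ∀ v : Fin (4 * n) → ZMod 2, π (v + κ) = π v + fun _ => 1 := by
    intro v; funext i
    show v i.1 + κ i.1 = v i.1 + 1
    rw [zmod2_one i.2]
  -- the key fiber lemma
  have key : ∀ v ∈ C, ∀ w ∈ C, v ≠ w → π v = π w → w = v + (κ + u) := by
    intro v hv w hw hvw hproj
    have hagree : ∀ i : Fin (4 * n), κ i ≠ 0 → v i = w i := fun i hi => congrFun hproj ⟨i, hi⟩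
    have hne2 : v ≠ w + u := by
      rintro rfl
      obtain ⟨i, hi⟩ := Function.ne_iff.mp hκ0
      simp only [Pi.zero_apply] at hi
      have h1 := hagree i hi
      simp only [Pi.add_apply, hu] at h1
      exact zmod2_add_one_ne (w i) h1.symm.symm
    have hd : hammingDist v w = 2 * n := by
      have := hdist v hv w hw hvw hne2; omega
    have hsub : (univ.filter fun i : Fin (4 * n) => v i ≠ w i) ⊆
        (univ.filter fun i : Fin (4 * n) => ¬ κ i ≠ 0) := by
      intro i hi
      simp only [mem_filter, mem_univ, true_and, not_not] at hi ⊢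
      by_contra hne
      exact hi (hagree i hne)
    have hdcard : (univ.filter fun i : Fin (4 * n) => v i ≠ w i).card = 2 * n := by
      have : (univ.filter fun i : Fin (4 * n) => v i ≠ w i).card = hammingDist v w := by
        simp [hammingDist]
      omega
    have heqf : (univ.filter fun i : Fin (4 * n) => v i ≠ w i) =
        (univ.filter fun i : Fin (4 * n) => ¬ κ i ≠ 0) :=
      Finset.eq_of_subset_of_card_le hsub (by omega)
    funext i
    show w i = v i + (κ i + 1)
    by_cases hi : κ i ≠ 0
    · rw [zmod2_one hi, ← hagree i hi]
      exact (zmod2_a2 _).symm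
    · have hmem : i ∈ univ.filter fun i : Fin (4 * n) => v i ≠ w i := by
        rw [heqf]
        simp only [mem_filter, mem_univ, true_and]
        exact hi
      simp only [mem_filter, mem_univ, true_and] at hmem
      have hκi : κ i = 0 := not_not.mp hi
      rw [hκi, zero_add]
      exact zmod2_ne.mp hmem
  -- counting
  have hfin : C.Finite := Set.toFinite C
  set F := hfin.toFinset with hF
  have hFmem : ∀ v, v ∈ F ↔ v ∈ C := fun v => Set.Finite.mem_toFinset hfin
  have hFcard : F.card = 8 * n := by
    have h1 := Set.ncard_eq_toFinset_card C hfin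
    rw [← hF] at h1
    omega
  have hvne : ∀ v : Fin (4 * n) → ZMod 2, v ≠ v + (κ + u) := by
    intro v h
    apply hκuC
    have h2 := congrArg (fun x => x - v) h
    simpa using h2.symm
  have hfiber : ∀ b ∈ F.image π, (F.filter fun a => π a = b).card = 2 := by
    intro b hb
    obtain ⟨v, hvF, hvb⟩ := Finset.mem_image.mp hb
    have hvC : v ∈ C := (hFmem v).mp hvF
    have hfe : (F.filter fun a => π a = b) = {v, v + (κ + u)} := by
      ext w
      simp only [mem_filter, mem_insert, mem_singleton, hFmem]
      constructor
      · rintro ⟨hwC, hwb⟩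
        by_cases hvw : v = w
        · left; exact hvw.symm
        · right; exact key v hvC w hwC hvw (by rw [hvb, hwb])
      · rintro (rfl | rfl)
        · exact ⟨hvC, hvb⟩
        · exact ⟨hKu v hvC, by rw [hπκu, hvb]⟩
    rw [hfe, Finset.card_insert_of_notMem (by simp [hvne v]), Finset.card_singleton]
  have himgcard : (F.image π).card = 4 * n := by
    have h1 := Finset.card_eq_sum_card_image π F
    rw [Finset.sum_congr rfl hfiber, Finset.sum_const, smul_eq_mul] at h1
    omega
  have himg : π '' C = ↑(F.image π) := by
    rw [Finset.coe_image, Set.Finite.coe_toFinset]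
  have hncard : (π '' C).ncard = 2 * (2 * n) := by
    rw [himg, Set.ncard_coe_finset]; omega
  -- assemble
  refine ⟨hS, ⟨0, h0, rfl⟩, ?_, hncard, ?_⟩
  · rintro x ⟨v, hv, rfl⟩
    exact ⟨v + u, hcompl v hv, rfl⟩
  · rintro x ⟨v, hv, rfl⟩ y ⟨w, hw, rfl⟩ hxy hxyu
    -- distances in the big space
    have hvw : v ≠ w := by rintro rfl; exact hxy rfl
    have hvwu : v ≠ w + u := by
      rintro rfl; exact hxyu (hπu w)
    have hvwκ : v ≠ w + κ := by
      rintro rfl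
      exact hxyu (by rw [hπκ])
    have hvwκu : v ≠ w + κ + u := by
      rintro rfl
      apply hxy
      have h3 : π (w + κ + u) = π w := by
        have h4 : w + κ + u = w + (κ + u) := by ring
        rw [h4, hπκu]
      rw [h3]
    have hwκC : w + κ ∈ C := by
      have := hK w hw; rwa [add_comm] at this
    have e1 : hammingDist v w = 2 * n := by
      have := hdist v hv w hw hvw hvwu; omega
    have e2 : hammingDist v (w + κ) = 2 * n := by
      have := hdist v hv (w + κ) hwκC hvwκ hvwκu; omega
    -- splitting distances along the support of κ
    have hsplit : ∀ a b : Fin (4 * n) → ZMod 2, hammingDist a b =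
        (univ.filter fun i : Fin (4 * n) => a i ≠ b i ∧ κ i ≠ 0).card +
        (univ.filter fun i : Fin (4 * n) => a i ≠ b i ∧ ¬ κ i ≠ 0).card := by
      intro a b
      have h1 := Finset.card_filter_add_card_filter_not
        (s := univ.filter fun i : Fin (4 * n) => a i ≠ b i) (p := fun i => κ i ≠ 0)
      rw [Finset.filter_filter, Finset.filter_filter] at h1
      have h2 : hammingDist a b = (univ.filter fun i : Fin (4 * n) => a i ≠ b i).card := by
        simp [hammingDist]
      omega
    set A := (univ.filter fun i : Fin (4 * n) => v i ≠ w i ∧ κ i ≠ 0).card with hA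
    set B := (univ.filter fun i : Fin (4 * n) => v i ≠ w i ∧ ¬ κ i ≠ 0).card with hB
    have hBeq : (univ.filter fun i : Fin (4 * n) => v i ≠ (w + κ) i ∧ ¬ κ i ≠ 0) =
        (univ.filter fun i : Fin (4 * n) => v i ≠ w i ∧ ¬ κ i ≠ 0) := by
      apply Finset.filter_congr
      intro i _
      by_cases hi : κ i ≠ 0
      · simp [hi]
      · have h5 : κ i = 0 := not_not.mp hi
        simp [Pi.add_apply, h5]
    have hAeq : (univ.filter fun i : Fin (4 * n) => v i ≠ (w + κ) i ∧ κ i ≠ 0) =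
        (univ.filter fun i : Fin (4 * n) => ¬ (v i ≠ w i) ∧ κ i ≠ 0) := by
      apply Finset.filter_congr
      intro i _
      by_cases hi : κ i ≠ 0
      · have h1 : κ i = 1 := zmod2_one hi
        simp only [Pi.add_apply, h1]
        constructor
        · rintro ⟨h2, h3⟩; exact ⟨(zmod2_flip _ _).mp h2, h3⟩
        · rintro ⟨h2, h3⟩; exact ⟨(zmod2_flip _ _).mpr h2, h3⟩
      · simp [hi]
    have hAA' : A + (univ.filter fun i : Fin (4 * n) => ¬ (v i ≠ w i) ∧ κ i ≠ 0).card
        = 2 * n := by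
      have h1 := Finset.card_filter_add_card_filter_not
        (s := univ.filter fun i : Fin (4 * n) => κ i ≠ 0) (p := fun i => v i ≠ w i)
      rw [Finset.filter_filter, Finset.filter_filter] at h1
      have hc1 : (univ.filter fun i : Fin (4 * n) => κ i ≠ 0 ∧ v i ≠ w i).card = A := by
        rw [hA]; congr 1; ext i; simp only [mem_filter, mem_univ, true_and]; tauto
      have hc2 : (univ.filter fun i : Fin (4 * n) => κ i ≠ 0 ∧ ¬ v i ≠ w i).card =
          (univ.filter fun i : Fin (4 * n) => ¬ (v i ≠ w i) ∧ κ i ≠ 0).card := by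
        congr 1; ext i; simp only [mem_filter, mem_univ, true_and]; tauto
      omega
    have he1 : A + B = 2 * n := by rw [← e1, hsplit v w]
    have he2 : (univ.filter fun i : Fin (4 * n) => ¬ (v i ≠ w i) ∧ κ i ≠ 0).card + B
        = 2 * n := by
      have h6 := hsplit v (w + κ)
      rw [hAeq, hBeq] at h6
      omega
    have hAn : A = n := by omega
    -- the projected distance equals A
    have hpd : hammingDist (π v) (π w) = A := by
      have h7 : hammingDist (π v) (π w) =
          (univ.filter fun i : {i : Fin (4 * n) // κ i ≠ 0} => v i.1 ≠ w i.1).card := by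
        simp [hammingDist, hπ]
      rw [h7, hA]
      exact card_filter_sub (fun i => κ i ≠ 0) (fun i => v i ≠ w i)
    rw [hpd, hAn]
end

section
/- Let (C, *) be a propelinear code. A codeword x belongs to the kernel K(C) if and only if its associated permutation π_x is an automorphism of C (i.e., π_x(C) = C). -/
/-- The action of a coordinate permutation `σ` on a binary vector. -/
def permAct {m : ℕ} (σ : Equiv.Perm (Fin m)) (v : Fin m → ZMod 2) : Fin m → ZMod 2 :=
  fun j => v (σ⁻¹ j)

lemma permAct_injective {m : ℕ} (σ : Equiv.Perm (Fin m)) :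
    Function.Injective (permAct σ) := by
  intro u v h
  funext j
  have := congrFun h (σ j)
  simpa [permAct] using this

lemma image_eq_of_maps_to {m : ℕ} (C : Set (Fin m → ZMod 2))
    (f : (Fin m → ZMod 2) → (Fin m → ZMod 2)) (hf : Function.Injective f)
    (h : f '' C ⊆ C) : f '' C = C := by
  apply Set.eq_of_subset_of_ncard_le h
  rw [Set.ncard_image_of_injective _ hf]

lemma zmod2_add_add (a b : ZMod 2) : a + (a + b) = b := by revert a b; decide

/-- in a propelinear code `(C, *)`, a codeword `x` belongs to the
kernel `K(C)` if and only if its associated permutation `π_x` is an automorphism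
of `C`, i.e. `π_x(C) = C`. -/
theorem mem_kernel_iff_perm_automorphism (m : ℕ)
    (C : Set (Fin m → ZMod 2)) (π : (Fin m → ZMod 2) → Equiv.Perm (Fin m))
    (h0 : (0 : Fin m → ZMod 2) ∈ C)
    (hadd : ∀ x ∈ C, ∀ y ∈ C, x + permAct (π x) y ∈ C)
    (hcomp : ∀ x ∈ C, ∀ y ∈ C, π x * π y = π (x + permAct (π x) y))
    (x : Fin m → ZMod 2) (hx : x ∈ C) :
    x ∈ kernelOf C ↔ permAct (π x) '' C = C := by
  have hxinj : Function.Injective (fun v : Fin m → ZMod 2 => x + v) := by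
    intro u v h
    funext j
    have := congrFun h j
    simpa using this
  constructor
  · intro hk
    have hk' : (fun v => x + v) '' C = C := hk
    apply image_eq_of_maps_to C _ (permAct_injective (π x))
    rintro _ ⟨y, hy, rfl⟩
    have h1 : x + permAct (π x) y ∈ C := hadd x hx y hy
    have h2 : permAct (π x) y = x + (x + permAct (π x) y) := by
      funext j; exact (zmod2_add_add _ _).symm
    rw [h2, ← hk']
    exact ⟨_, h1, rfl⟩
  · intro hp
    show (fun v => x + v) '' C = C
    apply image_eq_of_maps_to C _ hxinj
    rintro _ ⟨y, hy, rfl⟩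
    rw [← hp] at hy
    obtain ⟨z, hz, rfl⟩ := hy
    exact hadd x hx z hz
end

section
/- There are no circulant Hadamard codes of length 4n = 2^s with s ≥ 3. Equivalently, there is no circulant Hadamard matrix of order 2^s for s ≥ 3. -/
open Polynomial Finset

noncomputable section

namespace NCH

variable (M : ℕ)

/-- the polynomial X^M + 1 over ℤ -/
def P : ℤ[X] := X ^ M + 1

/-- the ring ℤ[x]/(x^M+1) -/
abbrev A := AdjoinRoot (P M)

lemma P_monic (hM : 0 < M) : (P M).Monic := by
  have : (1 : ℤ[X]) = C 1 := by simp
  rw [P, this]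
  refine monic_X_pow_add ((degree_C_le).trans_lt ?_)
  exact_mod_cast hM

lemma P_degree (hM : 0 < M) : (P M).degree = M := by
  have : (1 : ℤ[X]) = C 1 := by simp
  rw [P, this]
  exact degree_X_pow_add_C hM 1

/-- the root -/
def rt : A M := AdjoinRoot.root (P M)

lemma rt_pow_M : rt M ^ M = -1 := by
  have h : rt M ^ M + 1 = 0 := by
    have h0 : (AdjoinRoot.mk (P M)) (P M) = 0 := AdjoinRoot.mk_self
    calc rt M ^ M + 1 = AdjoinRoot.mk (P M) (X ^ M + 1) := by
          rw [map_add, map_pow, AdjoinRoot.mk_X, map_one, rt]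
      _ = 0 := h0
  linear_combination h

lemma rt_pow_2M : rt M ^ (2 * M) = 1 := by
  rw [mul_comm, pow_mul, rt_pow_M]
  ring

lemma rt_pow_mod (n : ℕ) : rt M ^ (n % (2 * M)) = rt M ^ n := by
  conv_rhs => rw [← Nat.div_add_mod n (2 * M)]
  rw [pow_add, pow_mul, rt_pow_2M, one_pow, one_mul]


/-- reduction mod 2 map, sending the root to 1 -/
def psi : A M →+* ZMod 2 :=
  AdjoinRoot.lift (Int.castRingHom (ZMod 2)) 1 (by
    rw [eval₂_at_one]
    have : (P M).eval 1 = 2 := by simp [P]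
    rw [this]
    decide)

lemma psi_rt : psi M (rt M) = 1 := AdjoinRoot.lift_root _

/-- the prime element 1 + root -/
def pi : A M := 1 + rt M

lemma psi_pi : psi M (pi M) = 0 := by
  rw [pi, map_add, map_one, psi_rt]
  decide

/-- coordinate functionals -/
def lam (hM : 0 < M) (j : ℕ) : A M →ₗ[ℤ] ℤ :=
  (Polynomial.lcoeff ℤ j).comp (AdjoinRoot.modByMonicHom (P_monic M hM))

lemma lam_rt_pow (hM : 0 < M) (j : ℕ) (i : ℕ) (hi : i < M) :
    lam M hM j (rt M ^ i) = if i = j then 1 else 0 := by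
  have h1 : rt M ^ i = AdjoinRoot.mk (P M) (X ^ i) := by
    rw [map_pow, AdjoinRoot.mk_X, rt]
  rw [lam, h1, LinearMap.comp_apply, AdjoinRoot.modByMonicHom_mk]
  have h2 : (X ^ i : ℤ[X]) %ₘ (P M) = X ^ i := by
    rw [modByMonic_eq_self_iff (P_monic M hM), P_degree M hM, degree_X_pow]
    exact_mod_cast hi
  rw [h2, lcoeff_apply, coeff_X_pow]
  simp only [eq_comm]

lemma lam_coords (hM : 0 < M) (c : ℕ → ℤ) (j : ℕ) (hj : j < M) :
    lam M hM j (∑ i ∈ range M, c i • rt M ^ i) = c j := by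
  rw [map_sum]
  rw [Finset.sum_eq_single j]
  · rw [map_smul, lam_rt_pow M hM j j hj, if_pos rfl, smul_eq_mul, mul_one]
  · intro i hi hij
    rw [map_smul, lam_rt_pow M hM j i (mem_range.mp hi), if_neg hij, smul_eq_mul, mul_zero]
  · intro h
    exact absurd (mem_range.mpr hj) h

lemma dvd_coords (hM : 0 < M) (n : ℤ) (c : ℕ → ℤ)
    (h : (n : A M) ∣ ∑ i ∈ range M, c i • rt M ^ i) : ∀ j < M, n ∣ c j := by
  intro j hj
  obtain ⟨y, hy⟩ := h
  have : (∑ i ∈ range M, c i • rt M ^ i) = n • y := by rw [hy, zsmul_eq_mul]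
  have h2 := congrArg (lam M hM j) this
  rw [lam_coords M hM c j hj, map_smul, smul_eq_mul] at h2
  exact ⟨_, h2⟩

lemma lam_one (hM : 2 ≤ M) : lam M (by omega) 0 (1 : A M) = 1 := by
  have := lam_rt_pow M (by omega) 0 0 (by omega)
  simpa using this

lemma pi_ne_zero (hM : 2 ≤ M) : pi M ≠ 0 := by
  intro h
  have h1 : lam M (by omega : 0 < M) 0 (pi M) = 1 := by
    rw [pi, map_add, lam_one M hM]
    have := lam_rt_pow M (by omega : 0 < M) 0 1 (by omega)
    rw [pow_one] at this
    rw [this]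
    simp
  rw [h, map_zero] at h1
  exact one_ne_zero h1.symm

lemma pi_dvd_two (hEv : Even M) : pi M ∣ 2 := by
  obtain ⟨t, ht⟩ := hEv
  refine ⟨(1 - rt M) * ∑ i ∈ range t, (rt M ^ 2) ^ i, ?_⟩
  have h := geom_sum_mul (rt M ^ 2) t
  have hM : (rt M ^ 2) ^ t = -1 := by
    rw [← pow_mul, show 2 * t = M by omega, rt_pow_M]
  rw [hM] at h
  rw [pi]
  linear_combination h

lemma psi_zero_imp_dvd (hEv : Even M) (x : A M) (hx : psi M x = 0) : pi M ∣ x := by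
  induction x using AdjoinRoot.induction_on with
  | ih p =>
    obtain ⟨q, hq⟩ := X_sub_C_dvd_sub_C_eval (a := (1 : ℤ)) (p := p)
    -- hq : p - C (p.eval 1) = (X - C 1) * q  (as a dvd witness)
    have hpsi : psi M (AdjoinRoot.mk (P M) p) = ((p.eval 1 : ℤ) : ZMod 2) := by
      rw [psi, AdjoinRoot.lift_mk, eval₂_at_one]
      rfl
    rw [hpsi] at hx
    have h2 : (2 : ℤ) ∣ p.eval 1 := by
      exact_mod_cast (ZMod.intCast_zmod_eq_zero_iff_dvd _ 2).mp hx
    have hdvd1 : pi M ∣ (rt M - 1) := by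
      have : rt M - 1 = pi M - 2 := by rw [pi]; ring
      rw [this]
      exact dvd_sub dvd_rfl (pi_dvd_two M hEv)
    have hdvd2 : pi M ∣ ((p.eval 1 : ℤ) : A M) := by
      obtain ⟨c, hc⟩ := h2
      rw [hc]
      push_cast
      exact Dvd.dvd.mul_right (pi_dvd_two M hEv) _
    have hrepr : AdjoinRoot.mk (P M) p
        = (rt M - 1) * AdjoinRoot.mk (P M) q + ((p.eval 1 : ℤ) : A M) := by
      have h3 : p = (X - C 1) * q + C (p.eval 1) := by linear_combination hq
      have h4 := congrArg (AdjoinRoot.mk (P M)) h3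
      rw [map_add, map_mul, map_sub, AdjoinRoot.mk_X, AdjoinRoot.mk_C, AdjoinRoot.mk_C] at h4
      have hr : AdjoinRoot.root (P M) = rt M := rfl
      rw [hr, eq_intCast, eq_intCast] at h4
      rw [h4]
      push_cast
      ring
    rw [hrepr]
    exact dvd_add (Dvd.dvd.mul_right hdvd1 _) hdvd2


lemma pi_not_unit : ¬ IsUnit (pi M) := by
  intro h
  have := h.map (psi M)
  rw [psi_pi] at this
  exact this.ne_zero rfl

lemma pi_prime (hM : 2 ≤ M) (hEv : Even M) : Prime (pi M) := by
  refine ⟨pi_ne_zero M hM, pi_not_unit M, ?_⟩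
  intro x y hxy
  obtain ⟨c, hc⟩ := hxy
  have h0 : psi M x * psi M y = 0 := by
    rw [← map_mul, hc, map_mul, psi_pi, zero_mul]
  rcases mul_eq_zero.mp h0 with h | h
  · exact Or.inl (psi_zero_imp_dvd M hEv x h)
  · exact Or.inr (psi_zero_imp_dvd M hEv y h)

/-- the element z with (1+r)^M = 2z -/
def zz : A M := ∑ i ∈ range M, (if i = 0 then 0 else ((M.choose i / 2 : ℕ) : ℤ)) • rt M ^ i

lemma choose_even (k i : ℕ) (h0 : i ≠ 0) (hi : i < 2 ^ k) : 2 ∣ (2 ^ k).choose i :=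
  Nat.Prime.dvd_choose_pow Nat.prime_two h0 hi.ne

lemma pi_pow_M (k : ℕ) (hk : M = 2 ^ k) (hM : 1 ≤ M) : pi M ^ M = 2 * zz M := by
  have hb : pi M ^ M = (∑ i ∈ range M, ((M.choose i : ℤ)) • rt M ^ i) + (-1) := by
    rw [pi, add_comm, add_pow, sum_range_succ, Nat.choose_self, rt_pow_M]
    simp only [Nat.sub_self, pow_zero, one_pow, mul_one, Nat.cast_one]
    congr 1
    refine Finset.sum_congr rfl ?_
    intro i _
    rw [zsmul_eq_mul]
    push_cast
    ring
  have h2 : (2 : A M) * zz M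
      = ∑ i ∈ range M, (if i = 0 then 0 else (M.choose i : ℤ)) • rt M ^ i := by
    rw [zz, Finset.mul_sum]
    refine Finset.sum_congr rfl ?_
    intro i hi
    by_cases h0 : i = 0
    · simp [h0]
    · rw [if_neg h0, if_neg h0]
      have hdvd : 2 ∣ M.choose i := by
        rw [hk]
        exact choose_even k i h0 (by rw [← hk]; exact mem_range.mp hi)
      have hcoef : (M.choose i : ℤ) = ((M.choose i / 2 : ℕ) : ℤ) * 2 := by
        exact_mod_cast (Nat.div_mul_cancel hdvd).symm
      rw [zsmul_eq_mul, zsmul_eq_mul, hcoef]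
      push_cast
      ring
  rw [hb, h2]
  have h3 : ∑ i ∈ range M, ((M.choose i : ℤ)) • rt M ^ i
      = (∑ i ∈ range M, (if i = 0 then 0 else (M.choose i : ℤ)) • rt M ^ i) + 1 := by
    have h4 : ∑ i ∈ range M, (((M.choose i : ℤ)) • rt M ^ i
        - (if i = 0 then 0 else (M.choose i : ℤ)) • rt M ^ i) = 1 := by
      have h5 : ∀ i ∈ range M, ((M.choose i : ℤ)) • rt M ^ i
          - (if i = 0 then 0 else (M.choose i : ℤ)) • rt M ^ i
          = if i = 0 then (1 : A M) else 0 := by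
        intro i _
        by_cases h0 : i = 0
        · simp [h0]
        · rw [if_neg h0, if_neg h0]
          ring
      rw [Finset.sum_congr rfl h5, Finset.sum_ite_eq' (range M) 0 (fun _ => (1 : A M))]
      rw [if_pos (mem_range.mpr (by omega : 0 < M))]
    rw [Finset.sum_sub_distrib] at h4
    linear_combination h4
  rw [h3]
  ring

lemma psi_zz (k : ℕ) (hk : M = 2 ^ k) (hM : 2 ≤ M) : psi M (zz M) = 1 := by
  have h1 : psi M (zz M)
      = ((∑ i ∈ range M, (if i = 0 then 0 else ((M.choose i / 2 : ℕ) : ℤ)) : ℤ) : ZMod 2) := by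
    rw [zz, map_sum]
    rw [Int.cast_sum]
    refine Finset.sum_congr rfl ?_
    intro i _
    rw [map_zsmul, zsmul_eq_mul, map_pow, psi_rt, one_pow, mul_one]
  set S : ℤ := ∑ i ∈ range M, (if i = 0 then 0 else ((M.choose i / 2 : ℕ) : ℤ)) with hS
  have h2 : 2 * S = 2 ^ M - 2 := by
    have ha : ∀ i ∈ range M, 2 * (if i = 0 then 0 else ((M.choose i / 2 : ℕ) : ℤ))
        = (if i = 0 then 0 else ((M.choose i : ℕ) : ℤ)) := by
      intro i hi
      by_cases h0 : i = 0
      · simp [h0]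
      · rw [if_neg h0, if_neg h0]
        have hdvd : 2 ∣ M.choose i := by
          rw [hk]
          exact choose_even k i h0 (by rw [← hk]; exact mem_range.mp hi)
        have hcoef : (M.choose i : ℤ) = ((M.choose i / 2 : ℕ) : ℤ) * 2 := by
          exact_mod_cast (Nat.div_mul_cancel hdvd).symm
        rw [hcoef]
        ring
    rw [hS, Finset.mul_sum, Finset.sum_congr rfl ha]
    have hb : ∑ i ∈ range M, (if i = 0 then 0 else ((M.choose i : ℕ) : ℤ))
        = (∑ i ∈ range M, ((M.choose i : ℕ) : ℤ)) - 1 := by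
      have h5 : ∀ i ∈ range M, ((M.choose i : ℕ) : ℤ)
          - (if i = 0 then 0 else ((M.choose i : ℕ) : ℤ)) = if i = 0 then (1 : ℤ) else 0 := by
        intro i _
        by_cases h0 : i = 0
        · simp [h0]
        · rw [if_neg h0, if_neg h0]
          ring
      have h6 : ∑ i ∈ range M, (((M.choose i : ℕ) : ℤ)
          - (if i = 0 then 0 else ((M.choose i : ℕ) : ℤ))) = 1 := by
        rw [Finset.sum_congr rfl h5, Finset.sum_ite_eq' (range M) 0 (fun _ => (1 : ℤ))]
        rw [if_pos (mem_range.mpr (by omega : 0 < M))]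
      rw [Finset.sum_sub_distrib] at h6
      linarith
    rw [hb]
    have hc : (∑ i ∈ range M, ((M.choose i : ℕ) : ℤ)) = 2 ^ M - 1 := by
      have := Nat.sum_range_choose M
      have h' : ∑ i ∈ range (M + 1), ((M.choose i : ℕ) : ℤ) = 2 ^ M := by
        exact_mod_cast congrArg (Nat.cast : ℕ → ℤ) this
      rw [sum_range_succ, Nat.choose_self] at h'
      push_cast at h' ⊢
      linarith
    rw [hc]
    ring
  have h3 : S = 2 ^ (M - 1) - 1 := by
    have hp : (2 : ℤ) ^ M = 2 * 2 ^ (M - 1) := by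
      conv_lhs => rw [show M = (M - 1) + 1 by omega]
      ring
    linarith
  rw [h1, h3]
  push_cast
  rw [show ((2 : ZMod 2)) = 0 by decide, zero_pow (by omega : M - 1 ≠ 0)]
  decide


lemma P_prime_poly (k : ℕ) : Prime (P (2 ^ (k + 1))) := by
  have h : P (2 ^ (k + 1)) = Polynomial.cyclotomic (2 ^ (k + 2)) ℤ := by
    rw [show k + 2 = (k + 1) + 1 from rfl, Polynomial.cyclotomic_prime_pow_eq_geom_sum Nat.prime_two]
    rw [P]
    rw [Finset.sum_range_succ, Finset.sum_range_one]
    ring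
  rw [h]
  exact (Polynomial.cyclotomic.irreducible (by positivity)).prime

lemma isDomain_A (k : ℕ) : IsDomain (A (2 ^ (k + 1))) := by
  have hprime : Prime (P (2 ^ (k + 1))) := P_prime_poly k
  have hsp : (Ideal.span {P (2 ^ (k + 1))} : Ideal ℤ[X]).IsPrime :=
    (Ideal.span_singleton_prime hprime.ne_zero).mpr hprime
  exact Ideal.Quotient.isDomain (Ideal.span {P (2 ^ (k + 1))})

/-- exact order of pi in x -/
def Ordp (x : A M) (n : ℕ) : Prop := pi M ^ n ∣ x ∧ ¬ pi M ^ (n + 1) ∣ x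

lemma Ordp_unique {x : A M} {n l : ℕ} (h1 : Ordp M x n) (h2 : Ordp M x l) : n = l := by
  by_contra hne
  rcases Nat.lt_or_ge n l with h | h
  · exact h1.2 ((pow_dvd_pow _ (by omega)).trans h2.1)
  · rcases Nat.lt_or_ge l n with h' | h'
    · exact h2.2 ((pow_dvd_pow _ (by omega)).trans h1.1)
    · omega

lemma Ordp_exists {x : A M} {N : ℕ} (hN : ¬ pi M ^ N ∣ x) : ∃ n, Ordp M x n := by
  induction N with
  | zero => exact absurd (by simpa using (dvd_refl (1 : A M)).trans (one_dvd x)) hN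
  | succ N iH =>
    by_cases h : pi M ^ N ∣ x
    · exact ⟨N, h, hN⟩
    · exact iH h

lemma Ordp_mul [IsDomain (A M)] (hM : 2 ≤ M) (hEv : Even M) {x y : A M} {n l : ℕ}
    (hx : Ordp M x n) (hy : Ordp M y l) : Ordp M (x * y) (n + l) := by
  have hp := pi_prime M hM hEv
  obtain ⟨x1, hx1⟩ := hx.1
  obtain ⟨y1, hy1⟩ := hy.1
  have hxnd : ¬ pi M ∣ x1 := by
    rintro ⟨d, hd⟩
    exact hx.2 ⟨d, by rw [hx1, hd]; ring⟩
  have hynd : ¬ pi M ∣ y1 := by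
    rintro ⟨d, hd⟩
    exact hy.2 ⟨d, by rw [hy1, hd]; ring⟩
  constructor
  · rw [hx1, hy1, pow_add]
    exact mul_dvd_mul (Dvd.dvd.mul_right dvd_rfl x1) (Dvd.dvd.mul_right dvd_rfl y1)
  · rintro ⟨c, hc⟩
    have hne : pi M ^ (n + l) ≠ 0 := pow_ne_zero _ hp.ne_zero
    have : pi M ^ (n + l) * (x1 * y1) = pi M ^ (n + l) * (pi M * c) := by
      calc pi M ^ (n + l) * (x1 * y1) = (pi M ^ n * x1) * (pi M ^ l * y1) := by
            rw [pow_add]; ring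
        _ = x * y := by rw [hx1, hy1]
        _ = pi M ^ (n + l + 1) * c := hc
        _ = pi M ^ (n + l) * (pi M * c) := by rw [pow_succ]; ring
    have h2 : x1 * y1 = pi M * c := mul_left_cancel₀ hne this
    rcases hp.2.2 x1 y1 ⟨c, h2⟩ with h | h
    · exact hxnd h
    · exact hynd h

lemma Ordp_pow [IsDomain (A M)] (hM : 2 ≤ M) (hEv : Even M) {x : A M} {n : ℕ}
    (hx : Ordp M x n) (j : ℕ) : Ordp M (x ^ j) (j * n) := by
  induction j with
  | zero =>
    constructor
    · simp
    · rw [Nat.zero_mul, pow_zero, pow_one]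
      intro h
      exact pi_not_unit M (isUnit_of_dvd_one h)
  | succ j iH =>
    have := Ordp_mul M hM hEv iH hx
    rw [pow_succ]
    rw [show (j + 1) * n = j * n + n by ring]
    exact this

lemma Ordp_pi_pow [IsDomain (A M)] (hM : 2 ≤ M) (hEv : Even M) (n : ℕ) :
    Ordp M (pi M ^ n) n := by
  have h1 : Ordp M (pi M) 1 := by
    constructor
    · simpa using dvd_rfl
    · rintro ⟨c, hc⟩
      have hne : pi M ≠ 0 := pi_ne_zero M hM
      have : pi M * 1 = pi M * (pi M * c) := by
        rw [mul_one]
        calc pi M = pi M ^ (1 + 1) * c := hc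
          _ = pi M * (pi M * c) := by ring
      have h2 := mul_left_cancel₀ hne this
      exact pi_not_unit M (IsUnit.of_mul_eq_one _ h2.symm)
  have := Ordp_pow M hM hEv h1 n
  simpa using this

lemma Ordp_two (k : ℕ) (hk : M = 2 ^ k) [IsDomain (A M)] (hM : 2 ≤ M) (hEv : Even M) :
    Ordp M (2 : A M) M := by
  have hp := pi_prime M hM hEv
  have hzz : ¬ pi M ∣ zz M := by
    rintro ⟨c, hc⟩
    have := psi_zz M k hk hM
    rw [hc, map_mul, psi_pi, zero_mul] at this
    exact one_ne_zero this.symm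
  have hpm : pi M ^ M = 2 * zz M := pi_pow_M M k hk (by omega)
  constructor
  · refine hp.pow_dvd_of_dvd_mul_right M hzz ?_
    exact ⟨1, by rw [← hpm]; ring⟩
  · intro h
    have h2 : pi M ^ (M + 1) ∣ pi M ^ M := by
      rw [hpm]
      exact h.mul_right _
    exact (Ordp_pi_pow M hM hEv M).2 h2

/-- the involution r ↦ r^(2M-1) -/
def tau (hM : 1 ≤ M) : A M →+* A M :=
  AdjoinRoot.lift (algebraMap ℤ (A M)) (rt M ^ (2 * M - 1)) (by
    have h : ((rt M ^ (2 * M - 1)) ^ M) = -1 := by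
      rw [← pow_mul, ← rt_pow_mod]
      have harith : (2 * M - 1) * M % (2 * M) = M := by
        have h1 : (2 * M - 1) * M = 2 * M * (M - 1) + M := by
          have e1 : (2 * M - 1) * M = 2 * M * M - M := by
            rw [Nat.sub_mul, one_mul]
          have e2 : 2 * M * (M - 1) = 2 * M * M - 2 * M := by
            rw [Nat.mul_sub, mul_one]
          have e3 : M ≤ 2 * M * M := by nlinarith
          have e4 : 2 * M ≤ 2 * M * M := by nlinarith
          omega
        rw [h1, Nat.mul_add_mod]
        exact Nat.mod_eq_of_lt (by omega)
      rw [harith, rt_pow_M]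
    show Polynomial.eval₂ (algebraMap ℤ (A M)) (rt M ^ (2 * M - 1)) (X ^ M + 1) = 0
    rw [eval₂_add, eval₂_one, eval₂_X_pow, h]
    ring)

lemma tau_rt (hM : 1 ≤ M) : tau M hM (rt M) = rt M ^ (2 * M - 1) := AdjoinRoot.lift_root _

lemma rt_mul_inv (hM : 1 ≤ M) : rt M * rt M ^ (2 * M - 1) = 1 := by
  rw [← pow_succ']
  rw [show 2 * M - 1 + 1 = 2 * M by omega]
  exact rt_pow_2M M

lemma rt_unit (hM : 1 ≤ M) : IsUnit (rt M) :=
  IsUnit.of_mul_eq_one _ (rt_mul_inv M hM)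


lemma tau_y (hM : 1 ≤ M) : tau M hM (rt M ^ (2 * M - 1)) = rt M := by
  have hry : rt M * rt M ^ (2 * M - 1) = 1 := rt_mul_inv M hM
  have h1 : tau M hM (rt M ^ (2 * M - 1)) * tau M hM (rt M) = 1 := by
    rw [← map_mul, mul_comm, hry, map_one]
  rw [tau_rt M hM] at h1
  calc tau M hM (rt M ^ (2 * M - 1))
      = tau M hM (rt M ^ (2 * M - 1)) * (rt M * rt M ^ (2 * M - 1)) := by rw [hry, mul_one]
    _ = (tau M hM (rt M ^ (2 * M - 1)) * rt M ^ (2 * M - 1)) * rt M := by ring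
    _ = rt M := by rw [h1, one_mul]

lemma tau_tau (hM : 1 ≤ M) (x : A M) : tau M hM (tau M hM x) = x := by
  induction x using AdjoinRoot.induction_on with
  | ih p =>
    have hin : tau M hM (AdjoinRoot.mk (P M) p)
        = eval₂ (algebraMap ℤ (A M)) (rt M ^ (2 * M - 1)) p := AdjoinRoot.lift_mk _ p
    rw [hin, Polynomial.hom_eval₂]
    rw [RingHom.ext_int ((tau M hM).comp (algebraMap ℤ (A M))) (algebraMap ℤ (A M))]
    rw [tau_y M hM, ← Polynomial.aeval_def]
    rw [show rt M = AdjoinRoot.root (P M) from rfl, AdjoinRoot.aeval_eq]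

lemma tau_pi (hM : 1 ≤ M) : tau M hM (pi M) = rt M ^ (2 * M - 1) * pi M := by
  rw [pi, map_add, map_one, tau_rt]
  have h := rt_mul_inv M hM
  linear_combination -h

lemma dvd_tau (hM : 1 ≤ M) (j : ℕ) (x : A M) (h : pi M ^ j ∣ x) :
    pi M ^ j ∣ tau M hM x := by
  obtain ⟨c, hc⟩ := h
  refine ⟨(rt M ^ (2 * M - 1)) ^ j * tau M hM c, ?_⟩
  rw [hc, map_mul, map_pow, tau_pi]
  ring

lemma Ordp_tau (hM : 1 ≤ M) {x : A M} {n : ℕ} (h : Ordp M x n) :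
    Ordp M (tau M hM x) n := by
  constructor
  · exact dvd_tau M hM n x h.1
  · intro hdvd
    have := dvd_tau M hM (n + 1) _ hdvd
    rw [tau_tau] at this
    exact h.2 this


section Emap

variable (m : ℕ)

/-- exponential map Fin m → A M -/
def E (x : Fin m) : A M := rt M ^ x.val

lemma E_add [NeZero m] (hm : m = 2 * M) (x y : Fin m) :
    E M m (x + y) = E M m x * E M m y := by
  rw [E, E, E, Fin.val_add, ← pow_add]
  have h := rt_pow_mod M (x.val + y.val)
  rw [← hm] at h
  exact h

lemma E_zero [NeZero m] : E M m 0 = 1 := by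
  rw [E, Fin.val_zero, pow_zero]

lemma E_neg_mul [NeZero m] (hm : m = 2 * M) (x : Fin m) : E M m (-x) * E M m x = 1 := by
  rw [← E_add M m hm, neg_add_cancel, E_zero]

lemma tau_E [NeZero m] (hM : 1 ≤ M) (hm : m = 2 * M) (x : Fin m) :
    tau M hM (E M m x) = E M m (-x) := by
  have h1 : tau M hM (E M m x) * E M m x = 1 := by
    rw [E, map_pow, tau_rt M hM, ← mul_pow, mul_comm (rt M ^ (2 * M - 1)) (rt M),
      rt_mul_inv M hM, one_pow]
  have h2 := E_neg_mul M m hm x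
  calc tau M hM (E M m x) = tau M hM (E M m x) * (E M m (-x) * E M m x) := by rw [h2, mul_one]
    _ = (tau M hM (E M m x) * E M m x) * E M m (-x) := by ring
    _ = E M m (-x) := by rw [h1, one_mul]

/-- the Fourier-type element attached to a sequence -/
def FF (a : Fin m → ℤ) : A M := ∑ x : Fin m, a x • E M m x

def FFs [NeZero m] (a : Fin m → ℤ) : A M := ∑ x : Fin m, a x • E M m (-x)

lemma tau_FF [NeZero m] (hM : 1 ≤ M) (hm : m = 2 * M) (a : Fin m → ℤ) :
    tau M hM (FF M m a) = FFs M m a := by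
  rw [FF, FFs, map_sum]
  refine Finset.sum_congr rfl ?_
  intro x _
  rw [map_zsmul, tau_E M m hM hm]

lemma FF_mul_FFs [NeZero m] (hm : m = 2 * M) (a : Fin m → ℤ) (c0 : ℤ)
    (hR : ∀ d : Fin m, (∑ k : Fin m, a (d + k) * a k) = if d = 0 then c0 else 0) :
    FF M m a * FFs M m a = c0 • 1 := by
  rw [FF, FFs, Finset.sum_mul_sum]
  have hterm : ∀ x y : Fin m,
      (a x • E M m x) * (a y • E M m (-y)) = (a x * a y) • E M m (x - y) := by
    intro x y
    have hE : E M m (x - y) = E M m x * E M m (-y) := by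
      rw [sub_eq_add_neg, E_add M m hm]
    rw [hE, zsmul_eq_mul, zsmul_eq_mul, zsmul_eq_mul]
    push_cast
    ring
  calc (∑ x : Fin m, ∑ y : Fin m, (a x • E M m x) * (a y • E M m (-y)))
      = ∑ x : Fin m, ∑ y : Fin m, (a x * a y) • E M m (x - y) := by
        refine Finset.sum_congr rfl fun x _ => Finset.sum_congr rfl fun y _ => hterm x y
    _ = ∑ y : Fin m, ∑ x : Fin m, (a x * a y) • E M m (x - y) := Finset.sum_comm
    _ = ∑ y : Fin m, ∑ d : Fin m, (a (d + y) * a y) • E M m d := by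
        refine Finset.sum_congr rfl fun y _ => ?_
        refine (Fintype.sum_equiv (Equiv.addRight y)
          (fun d => (a (d + y) * a y) • E M m d)
          (fun x => (a x * a y) • E M m (x - y)) ?_).symm
        intro d
        simp [add_sub_cancel_right]
    _ = ∑ d : Fin m, ∑ y : Fin m, (a (d + y) * a y) • E M m d := Finset.sum_comm
    _ = ∑ d : Fin m, (∑ y : Fin m, a (d + y) * a y) • E M m d := by
        refine Finset.sum_congr rfl fun d _ => ?_
        rw [Finset.sum_smul]
    _ = ∑ d : Fin m, (if d = 0 then c0 else 0) • E M m d := by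
        refine Finset.sum_congr rfl fun d _ => by rw [hR d]
    _ = c0 • 1 := by
        have : ∀ d : Fin m, (if d = 0 then c0 else 0) • E M m d
            = if d = 0 then c0 • E M m d else 0 := by
          intro d
          by_cases h : d = 0 <;> simp [h]
        rw [Finset.sum_congr rfl fun d _ => this d]
        rw [Finset.sum_ite_eq' Finset.univ (0 : Fin m) (fun d => c0 • E M m d)]
        rw [if_pos (Finset.mem_univ _), E_zero]

lemma FFs_eq_FF [NeZero m] (a : Fin m → ℤ) : FFs M m a = FF M m (fun x => a (-x)) := by
  rw [FFs, FF]
  refine Fintype.sum_equiv (Equiv.neg (Fin m)) _ _ ?_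
  intro x
  simp

open Fin.NatCast in
lemma FF_coords [NeZero m] (hm : m = 2 * M) (a : Fin m → ℤ) :
    FF M m a = ∑ i ∈ range M, (a ((i : ℕ) : Fin m) - a ((M + i : ℕ) : Fin m)) • rt M ^ i := by
  rw [FF]
  have h1 : ∑ x : Fin m, a x • E M m x = ∑ i ∈ range m, a ((i : ℕ) : Fin m) • rt M ^ i := by
    rw [← Fin.sum_univ_eq_sum_range (fun i => a ((i : ℕ) : Fin m) • rt M ^ i) m]
    refine Finset.sum_congr rfl ?_
    intro x _
    rw [Fin.cast_val_eq_self]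
    rfl
  rw [h1]
  rw [show range m = range (M + M) from by rw [hm, two_mul]]
  rw [Finset.sum_range_add]
  have h2 : ∀ i ∈ range M, a ((M + i : ℕ) : Fin m) • rt M ^ (M + i)
      = -(a ((M + i : ℕ) : Fin m) • rt M ^ i) := by
    intro i _
    rw [pow_add, rt_pow_M, neg_one_mul, smul_neg]
  rw [Finset.sum_congr rfl h2, Finset.sum_neg_distrib, ← sub_eq_add_neg,
    ← Finset.sum_sub_distrib]
  exact Finset.sum_congr rfl fun i _ => (sub_smul _ _ _).symm

end Emap


open Fin.NatCast in
theorem main_even (M m s : ℕ) [NeZero m] (hm : m = 2 * M) (hMs : M = 2 ^ (s - 1)) (hs : 4 ≤ s)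
    (a : Fin m → ℤ) (ha : ∀ i, a i = 1 ∨ a i = -1)
    (hR : ∀ d : Fin m, (∑ k : Fin m, a (d + k) * a k) = if d = 0 then ((2 ^ s : ℕ) : ℤ) else 0) :
    False := by
  have hM2 : 2 ≤ M := by
    rw [hMs]
    calc 2 = 2 ^ 1 := rfl
      _ ≤ 2 ^ (s - 1) := Nat.pow_le_pow_right (by norm_num) (by omega)
  have hEv : Even M := ⟨2 ^ (s - 2), by
    rw [hMs, show s - 1 = (s - 2) + 1 by omega, pow_succ]; ring⟩
  haveI hdom : IsDomain (A M) := by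
    rw [show M = 2 ^ ((s - 2) + 1) from by rw [hMs]; congr 1; omega]
    exact isDomain_A (s - 2)
  have hprod : FF M m a * FFs M m a = ((2 ^ s : ℕ) : ℤ) • 1 := FF_mul_FFs M m hm a _ hR
  have hcne : ((2 ^ s : ℕ) : ℤ) • (1 : A M) ≠ 0 := by
    intro h0
    have h1 := congrArg (lam M (by omega : 0 < M) 0) h0
    rw [map_smul, lam_one M hM2, map_zero, smul_eq_mul, mul_one] at h1
    exact (by positivity : (0:ℤ) < ((2 ^ s : ℕ) : ℤ)).ne' h1
  have hFne : FF M m a ≠ 0 := fun h => hcne (by rw [← hprod, h, zero_mul])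
  have hcoords := FF_coords M m hm a
  have hbound : ¬ pi M ^ (2 * M) ∣ FF M m a := by
    intro hdvd
    have hpm : pi M ^ M = 2 * zz M := pi_pow_M M (s - 1) hMs (by omega)
    have h4 : (((4 : ℤ)) : A M) ∣ FF M m a := by
      obtain ⟨w, hw⟩ := hdvd
      refine ⟨zz M * zz M * w, ?_⟩
      rw [hw, show 2 * M = M + M by ring, pow_add, hpm]
      push_cast
      ring
    rw [hcoords] at h4
    have hd := dvd_coords M (by omega) 4 _ h4
    have hzero : ∀ i ∈ range M,
        (a ((i : ℕ) : Fin m) - a ((M + i : ℕ) : Fin m)) • rt M ^ i = 0 := by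
      intro i hi
      have h5 := hd i (mem_range.mp hi)
      have hc0 : a ((i : ℕ) : Fin m) - a ((M + i : ℕ) : Fin m) = 0 := by
        rcases ha ((i : ℕ) : Fin m) with h6 | h6 <;>
          rcases ha ((M + i : ℕ) : Fin m) with h7 | h7 <;>
          rw [h6, h7] at h5 ⊢ <;> omega
      rw [hc0, zero_smul]
    exact hFne (by rw [hcoords]; exact Finset.sum_eq_zero hzero)
  obtain ⟨α, hα⟩ := Ordp_exists M hbound
  have hαs : Ordp M (FFs M m a) α := by
    have h := Ordp_tau M (by omega : 1 ≤ M) hα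
    rw [tau_FF M m (by omega) hm] at h
    exact h
  have hmul := Ordp_mul M hM2 hEv hα hαs
  rw [hprod] at hmul
  have h2A : ((2 ^ s : ℕ) : ℤ) • (1 : A M) = (2 : A M) ^ s := by
    rw [zsmul_eq_mul, mul_one]
    push_cast
    ring
  have hord2 := Ordp_pow M hM2 hEv (Ordp_two M (s - 1) hMs hM2 hEv) s
  rw [← h2A] at hord2
  have heq := Ordp_unique M hmul hord2
  have hge : 2 * M ≤ α := by
    have h4M : 4 * M ≤ s * M := Nat.mul_le_mul_right M hs
    omega
  exact hbound ((pow_dvd_pow (pi M) hge).trans hα.1)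

end NCH

open Matrix

/-- There is no circulant Hadamard matrix of order 2^s for s ≥ 3
(equivalently, no circulant Hadamard code of length 4n = 2^s with s ≥ 3). -/
theorem no_circulant_hadamard_power_of_two (s : ℕ) (hs : 3 ≤ s) :
    ¬ ∃ a : Fin (2 ^ s) → ℤ,
      (∀ i, a i = 1 ∨ a i = -1) ∧
      Matrix.circulant a * (Matrix.circulant a)ᵀ =
        ((2 ^ s : ℕ) : ℤ) • (1 : Matrix (Fin (2 ^ s)) (Fin (2 ^ s)) ℤ) := by
  rintro ⟨a, ha, hmat⟩
  haveI : NeZero (2 ^ s) := ⟨by positivity⟩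
  have hR : ∀ d : Fin (2 ^ s),
      (∑ k : Fin (2 ^ s), a (d + k) * a k) = if d = 0 then ((2 ^ s : ℕ) : ℤ) else 0 := by
    intro d
    have h := congrFun (congrFun hmat d) 0
    rw [Matrix.mul_apply] at h
    simp only [Matrix.transpose_apply, Matrix.circulant_apply] at h
    have hRHS : (((2 ^ s : ℕ) : ℤ) • (1 : Matrix (Fin (2 ^ s)) (Fin (2 ^ s)) ℤ)) d 0
        = if d = 0 then ((2 ^ s : ℕ) : ℤ) else 0 := by
      rw [Matrix.smul_apply, Matrix.one_apply]
      by_cases hd : d = 0 <;> simp [hd]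
    rw [hRHS] at h
    rw [← h]
    refine Fintype.sum_equiv (Equiv.neg (Fin (2 ^ s))) _ _ ?_
    intro k
    simp only [Equiv.neg_apply]
    rw [sub_neg_eq_add, zero_sub, neg_neg]
  rcases Nat.even_or_odd s with hEs | hOs
  · -- even case
    have hs4 : 4 ≤ s := by
      rcases hEs with ⟨t, ht⟩
      omega
    exact NCH.main_even (2 ^ (s - 1)) (2 ^ s) s
      (by
        have h : s = (s - 1) + 1 := by omega
        calc (2:ℕ) ^ s = 2 ^ ((s - 1) + 1) := by rw [← h]
          _ = 2 * 2 ^ (s - 1) := by rw [pow_succ]; ring) rfl hs4 a ha hR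
  · -- odd case: row sum squared equals 2^s
    set S : ℤ := ∑ x : Fin (2 ^ s), a x with hS
    have hsq : S * S = ((2 ^ s : ℕ) : ℤ) := by
      have h1 : ∑ d : Fin (2 ^ s), (∑ k : Fin (2 ^ s), a (d + k) * a k)
          = ((2 ^ s : ℕ) : ℤ) := by
        rw [Finset.sum_congr rfl fun d _ => hR d]
        rw [Finset.sum_ite_eq' Finset.univ (0 : Fin (2 ^ s)) (fun _ => ((2 ^ s : ℕ) : ℤ))]
        rw [if_pos (Finset.mem_univ _)]
      have h2 : ∑ d : Fin (2 ^ s), (∑ k : Fin (2 ^ s), a (d + k) * a k) = S * S := by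
        rw [Finset.sum_comm]
        have h3 : ∀ k : Fin (2 ^ s), ∑ d : Fin (2 ^ s), a (d + k) * a k = S * a k := by
          intro k
          rw [← Finset.sum_mul]
          congr 1
          exact Fintype.sum_equiv (Equiv.addRight k) _ _ (fun d => rfl)
        rw [Finset.sum_congr rfl fun k _ => h3 k, ← Finset.mul_sum]
      rw [← h2, h1]
    have h1 : S.natAbs ^ 2 = 2 ^ s := by
      have h0 : (S * S).natAbs = (((2 ^ s : ℕ) : ℤ)).natAbs := congrArg _ hsq
      rw [Int.natAbs_mul, Int.natAbs_natCast] at h0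
      rw [pow_two]
      exact h0
    have hS0 : S.natAbs ≠ 0 := by
      intro h0
      rw [h0] at h1
      simp at h1
      exact absurd h1.symm (by positivity)
    have h2 := congrArg (fun n => n.factorization 2) h1
    simp only [Nat.factorization_pow, Nat.Prime.factorization_pow (Nat.prime_two),
      Finsupp.smul_apply, Finsupp.single_eq_same, smul_eq_mul] at h2
    exact (Nat.not_even_iff_odd.mpr hOs) ⟨S.natAbs.factorization 2, by omega⟩
end
end

section
/- Let C be a nonlinear circulant Hadamard code of length 4n = 2^s·n' with n' odd, given as an HFP-code C = ⟨a, u⟩ of type C_{4n} × C₂ with shift permutations. Then dim K(C) = 1, i.e., K(C) = {0, u}. (This holds without invoking Turyn's theorem that n is odd.) -/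
namespace CHK

/-- `h_i = (1 + x^i) g` -/
def hv (n : ℕ) (g : ZMod (4 * n) → ZMod 2) (i : ZMod (4 * n)) : ZMod (4 * n) → ZMod 2 :=
  g + shift (4 * n) i g

/-- the circulant Hadamard code -/
def codeSet (n : ℕ) (g : ZMod (4 * n) → ZMod 2) : Set (ZMod (4 * n) → ZMod 2) :=
  {v | ∃ (i : ZMod (4 * n)) (ξ : ZMod 2), v = hv n g i + ξ • allOne (4 * n)}

/-- the order-two element `2n` of `ZMod (4n)` -/
def NN (n : ℕ) : ZMod (4 * n) := ((2 * n : ℕ) : ZMod (4 * n))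

variable {n : ℕ} [NeZero n]

/- ZMod 2 kit -/
private lemma zc (a : ZMod 2) : a = 0 ∨ a = 1 := by revert a; decide
private lemma zaa (a : ZMod 2) : a + a = 0 := by revert a; decide

section shifts

variable {n : ℕ}

lemma shift_apply (i : ZMod (4 * n)) (v : ZMod (4 * n) → ZMod 2) (t : ZMod (4 * n)) :
    shift (4 * n) i v t = v (t - i) := rfl

@[simp] lemma shift_zero (v : ZMod (4 * n) → ZMod 2) : shift (4 * n) 0 v = v :=
  funext fun t => by simp [shift]

lemma shift_shift (i j : ZMod (4 * n)) (v : ZMod (4 * n) → ZMod 2) :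
    shift (4 * n) i (shift (4 * n) j v) = shift (4 * n) (i + j) v :=
  funext fun t => by simp [shift, sub_sub]

lemma shift_add (i : ZMod (4 * n)) (v w : ZMod (4 * n) → ZMod 2) :
    shift (4 * n) i (v + w) = shift (4 * n) i v + shift (4 * n) i w := rfl

lemma shift_smul (i : ZMod (4 * n)) (c : ZMod 2) (v : ZMod (4 * n) → ZMod 2) :
    shift (4 * n) i (c • v) = c • shift (4 * n) i v := rfl

@[simp] lemma shift_allOne (i : ZMod (4 * n)) :
    shift (4 * n) i (allOne (4 * n)) = allOne (4 * n) := rfl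

lemma shift_injective (i : ZMod (4 * n)) : Function.Injective (shift (4 * n) i) := by
  intro v w h
  funext t
  have := congrFun h (t + i)
  simpa [shift] using this

end shifts

section basics

variable {g : ZMod (4 * n) → ZMod 2}

lemma NN_add_NN : NN n + NN n = 0 := by
  have : ((2 * n : ℕ) : ZMod (4 * n)) + ((2 * n : ℕ) : ZMod (4 * n))
      = ((4 * n : ℕ) : ZMod (4 * n)) := by push_cast; ring
  rw [NN, this, ZMod.natCast_self]

lemma NN_ne_zero : NN n ≠ 0 := by
  intro h
  rw [NN, ZMod.natCast_eq_zero_iff] at h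
  have hn : n ≠ 0 := NeZero.ne n
  exact absurd (Nat.le_of_dvd (by omega) h) (by omega)

lemma neg_NN : -NN n = NN n := by
  have := NN_add_NN (n := n)
  linear_combination (norm := abel) -this

lemma twoTorsion {x : ZMod (4 * n)} (h : x + x = 0) : x = 0 ∨ x = NN n := by
  have hval : x.val < 4 * n := ZMod.val_lt x
  have hx : ((x.val : ℕ) : ZMod (4 * n)) = x := ZMod.natCast_zmod_val x
  have h2 : ((x.val + x.val : ℕ) : ZMod (4 * n)) = 0 := by push_cast [hx]; exact h
  rw [ZMod.natCast_eq_zero_iff] at h2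
  obtain ⟨k, hk⟩ := h2
  have : x.val = 0 ∨ x.val = 2 * n := by
    rcases Nat.lt_or_ge k 2 with hk2 | hk2
    · interval_cases k <;> omega
    · exfalso; have hn : n ≠ 0 := NeZero.ne n; nlinarith
  rcases this with h0 | h0
  · left; rw [← hx, h0]; simp
  · right; rw [← hx, h0]; rfl

lemma two_ne_zero'' (hn : 1 ≤ n) : (2 : ZMod (4 * n)) ≠ 0 := by
  intro h
  have : ((2 : ℕ) : ZMod (4 * n)) = 0 := by exact_mod_cast h
  rw [ZMod.natCast_eq_zero_iff] at this
  exact absurd (Nat.le_of_dvd (by omega) this) (by omega)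

end basics

end CHK
section chunk2

namespace CHK
set_option linter.unusedSectionVars false

variable {n : ℕ} [NeZero n] {g : ZMod (4 * n) → ZMod 2}

lemma hammingDist_eq (x y : ZMod (4 * n) → ZMod 2) :
    hammingDist x y = (Finset.univ.filter fun t => x t ≠ y t).card := by
  rw [hammingDist]

lemma dist_shift (hg : IsCircHadGen n g) {i : ZMod (4 * n)} (hi : i ≠ 0) :
    hammingDist g (shift (4 * n) i g) = 2 * n := by
  have := hg 0 i (fun h => hi h.symm)
  rwa [shift_zero] at this

/-- The fundamental uniqueness lemma. -/
lemma U (hg : IsCircHadGen n g) {k k' : ZMod (4 * n)} {ε : ZMod 2}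
    (h : shift (4 * n) k g + shift (4 * n) k' g = ε • allOne (4 * n)) :
    k = k' ∧ ε = 0 := by
  have hn : n ≠ 0 := NeZero.ne n
  rcases zc ε with rfl | rfl
  · have heq : shift (4 * n) k g = shift (4 * n) k' g := by
      funext t
      have h2 := congrFun h t
      revert h2
      have key : ∀ a b : ZMod 2, a + b = ((0 : ZMod 2) • allOne (4 * n)) t → a = b := by
        have : ((0 : ZMod 2) • allOne (4 * n)) t = 0 := by simp
        rw [this]; decide
      exact key _ _
    refine ⟨?_, rfl⟩
    by_contra hne
    have h2 := hg k k' hne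
    rw [heq, hammingDist_self] at h2
    omega
  · exfalso
    have hne' : ∀ t, shift (4 * n) k g t ≠ shift (4 * n) k' g t := by
      intro t
      have h2 := congrFun h t
      revert h2
      have key : ∀ a b : ZMod 2, a + b = ((1 : ZMod 2) • allOne (4 * n)) t → a ≠ b := by
        have : ((1 : ZMod 2) • allOne (4 * n)) t = 1 := by simp [allOne]
        rw [this]; decide
      exact key _ _
    rcases eq_or_ne k k' with rfl | hne
    · exact hne' 0 rfl
    · have h2 := hg k k' hne
      rw [hammingDist_eq] at h2
      rw [Finset.filter_true_of_mem (fun t _ => hne' t), Finset.card_univ, ZMod.card] at h2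
      omega

lemma mem_code {v : ZMod (4 * n) → ZMod 2} :
    v ∈ codeSet n g ↔ ∃ (i : ZMod (4 * n)) (ξ : ZMod 2), v = hv n g i + ξ • allOne (4 * n) := Iff.rfl

lemma hv_zero : hv n g 0 = 0 := by
  funext t
  show g t + shift (4 * n) 0 g t = 0
  rw [shift_zero]
  exact zaa _

lemma zero_mem_code : (0 : ZMod (4 * n) → ZMod 2) ∈ codeSet n g :=
  ⟨0, (0 : ZMod 2), by rw [hv_zero]; simp⟩

lemma code_finite : (codeSet n g).Finite := Set.toFinite _

/-- `h_i + h_j = x^i g + x^j g` -/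
lemma hv_add_hv (i j : ZMod (4 * n)) :
    hv n g i + hv n g j = shift (4 * n) i g + shift (4 * n) j g := by
  funext t
  show (g t + _) + (g t + _) = _ + _
  have : ∀ x a b : ZMod 2, (x + a) + (x + b) = a + b := by decide
  exact this _ _ _

lemma shift_hv (i j : ZMod (4 * n)) :
    shift (4 * n) i (hv n g j) = hv n g i + hv n g (i + j) := by
  rw [hv_add_hv]
  show shift (4 * n) i (g + shift (4 * n) j g) = _
  rw [shift_add, shift_shift]

/-- unique representation of codewords -/
lemma rep_unique (hg : IsCircHadGen n g) {i i' : ZMod (4 * n)} {ξ ξ' : ZMod 2}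
    (h : hv n g i + ξ • allOne (4 * n) = hv n g i' + ξ' • allOne (4 * n)) :
    i = i' ∧ ξ = ξ' := by
  have h2 : shift (4 * n) i g + shift (4 * n) i' g = (ξ + ξ') • allOne (4 * n) := by
    funext t
    have h3 := congrFun h t
    revert h3
    show (g t + _) + ξ * 1 = (g t + _) + ξ' * 1 → _ + _ = (ξ + ξ') * 1
    have : ∀ x a b c d : ZMod 2,
        (x + a) + c * 1 = (x + b) + d * 1 → a + b = (c + d) * 1 := by decide
    exact this _ _ _ _ _
  obtain ⟨hii, hxx⟩ := U hg h2
  refine ⟨hii, ?_⟩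
  have : ∀ c d : ZMod 2, c + d = 0 → c = d := by decide
  exact this _ _ hxx

end CHK

end chunk2
namespace CHK
set_option linter.unusedSectionVars false

variable {n : ℕ} [NeZero n] {g : ZMod (4 * n) → ZMod 2}

lemma code_add_smul {v : ZMod (4 * n) → ZMod 2} (hm : v ∈ codeSet n g) (ξ : ZMod 2) :
    v + ξ • allOne (4 * n) ∈ codeSet n g := by
  obtain ⟨i, ξ', rfl⟩ := hm
  exact ⟨i, ξ' + ξ, by rw [add_assoc, ← add_smul]⟩

lemma image_eq_of_subset {f : (ZMod (4 * n) → ZMod 2) → (ZMod (4 * n) → ZMod 2)}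
    (hf : Function.Injective f) (h : f '' codeSet n g ⊆ codeSet n g) :
    f '' codeSet n g = codeSet n g :=
  Set.eq_of_subset_of_ncard_le h
    (le_of_eq (Set.ncard_image_of_injective _ hf).symm) (code_finite)

/-- the group of shift-invariances of the code -/
def Igrp (n : ℕ) (g : ZMod (4 * n) → ZMod 2) : AddSubgroup (ZMod (4 * n)) where
  carrier := {i | shift (4 * n) i '' codeSet n g = codeSet n g}
  zero_mem' := by
    show shift (4 * n) 0 '' codeSet n g = codeSet n g
    rw [show shift (4 * n) (0 : ZMod (4 * n)) = id from funext fun v => shift_zero v,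
      Set.image_id]
  add_mem' := by
    intro a b ha hb
    show shift (4 * n) (a + b) '' codeSet n g = codeSet n g
    have h1 : shift (4 * n) (a + b) = (shift (4 * n) a) ∘ (shift (4 * n) b) := by
      funext v; exact (shift_shift a b v).symm
    rw [h1, Set.image_comp]
    have hb' : shift (4 * n) b '' codeSet n g = codeSet n g := hb
    have ha' : shift (4 * n) a '' codeSet n g = codeSet n g := ha
    rw [hb', ha']
  neg_mem' := by
    intro a ha
    show shift (4 * n) (-a) '' codeSet n g = codeSet n g
    have ha' : shift (4 * n) a '' codeSet n g = codeSet n g := ha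
    conv_lhs => rw [← ha', ← Set.image_comp]
    have h1 : (shift (4 * n) (-a)) ∘ (shift (4 * n) a) = id := by
      funext v
      show shift (4 * n) (-a) (shift (4 * n) a v) = v
      rw [shift_shift, neg_add_cancel, shift_zero]
    rw [h1, Set.image_id]

lemma Igrp_of {i : ZMod (4 * n)} (h : ∀ j, hv n g i + hv n g j ∈ codeSet n g) :
    i ∈ Igrp n g := by
  show shift (4 * n) i '' codeSet n g = codeSet n g
  apply image_eq_of_subset (shift_injective i)
  rintro x ⟨v, hvmem, rfl⟩
  obtain ⟨j, ξ, rfl⟩ := hvmem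
  rw [shift_add, shift_smul, shift_allOne, shift_hv]
  exact code_add_smul (h (i + j)) ξ

lemma Igrp_to {i : ZMod (4 * n)} (hi : i ∈ Igrp n g) (j : ZMod (4 * n)) :
    hv n g i + hv n g j ∈ codeSet n g := by
  have hmem : shift (4 * n) i (hv n g (j - i)) ∈ shift (4 * n) i '' codeSet n g :=
    ⟨_, ⟨j - i, (0 : ZMod 2), by simp⟩, rfl⟩
  have hi' : shift (4 * n) i '' codeSet n g = codeSet n g := hi
  rw [hi'] at hmem
  rw [shift_hv] at hmem
  have : i + (j - i) = j := by ring
  rwa [this] at hmem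

lemma kernel_mem_code {x : ZMod (4 * n) → ZMod 2} (hx : x ∈ kernelOf (codeSet n g)) :
    x ∈ codeSet n g := by
  have hx' : (fun v => x + v) '' codeSet n g = codeSet n g := hx
  rw [← hx']
  exact ⟨0, zero_mem_code, by simp⟩

lemma kernel_of_rep {i : ZMod (4 * n)} (hi : i ∈ Igrp n g) (ξ : ZMod 2) :
    hv n g i + ξ • allOne (4 * n) ∈ kernelOf (codeSet n g) := by
  show (fun v => (hv n g i + ξ • allOne (4 * n)) + v) '' codeSet n g = codeSet n g
  apply image_eq_of_subset (add_right_injective _)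
  rintro x ⟨v, hvmem, rfl⟩
  obtain ⟨j, ξ', rfl⟩ := hvmem
  have heq : (hv n g i + ξ • allOne (4 * n)) + (hv n g j + ξ' • allOne (4 * n))
      = (hv n g i + hv n g j) + (ξ + ξ') • allOne (4 * n) := by
    rw [add_smul, add_add_add_comm]
  show (hv n g i + ξ • allOne (4 * n)) + (hv n g j + ξ' • allOne (4 * n)) ∈ codeSet n g
  rw [heq]
  exact code_add_smul (Igrp_to hi j) _

lemma kernel_rep {x : ZMod (4 * n) → ZMod 2} (hx : x ∈ kernelOf (codeSet n g)) :
    ∃ i, i ∈ Igrp n g ∧ ∃ ξ : ZMod 2, x = hv n g i + ξ • allOne (4 * n) := by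
  obtain ⟨i, ξ, rfl⟩ := kernel_mem_code hx
  refine ⟨i, ?_, ξ, rfl⟩
  apply Igrp_of
  intro j
  have hx' : (fun v => (hv n g i + ξ • allOne (4 * n)) + v) '' codeSet n g = codeSet n g := hx
  have hmem : (hv n g i + ξ • allOne (4 * n)) + (hv n g j + ξ • allOne (4 * n))
      ∈ codeSet n g := by
    rw [← hx']
    exact ⟨hv n g j + ξ • allOne (4 * n), ⟨j, ξ, rfl⟩, rfl⟩
  have heq : (hv n g i + ξ • allOne (4 * n)) + (hv n g j + ξ • allOne (4 * n))
      = hv n g i + hv n g j := by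
    rw [add_add_add_comm, ← add_smul, zaa ξ, zero_smul, add_zero]
  rwa [heq] at hmem

lemma zero_mem_kernel : (0 : ZMod (4 * n) → ZMod 2) ∈ kernelOf (codeSet n g) := by
  have := kernel_of_rep (g := g) (Igrp n g).zero_mem (0 : ZMod 2)
  rwa [hv_zero, zero_smul, add_zero] at this

lemma allOne_mem_kernel : allOne (4 * n) ∈ kernelOf (codeSet n g) := by
  have := kernel_of_rep (g := g) (Igrp n g).zero_mem (1 : ZMod 2)
  rwa [hv_zero, one_smul, zero_add] at this

/-- The kernel as a submodule. -/
def Ksub (n : ℕ) [NeZero n] (g : ZMod (4 * n) → ZMod 2) :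
    Submodule (ZMod 2) (ZMod (4 * n) → ZMod 2) where
  carrier := kernelOf (codeSet n g)
  zero_mem' := zero_mem_kernel
  add_mem' := by
    intro a b ha hb
    show (fun v => (a + b) + v) '' codeSet n g = codeSet n g
    have ha' : (fun v => a + v) '' codeSet n g = codeSet n g := ha
    have hb' : (fun v => b + v) '' codeSet n g = codeSet n g := hb
    have h1 : (fun v => (a + b) + v) = (fun v => a + v) ∘ (fun v => b + v) := by
      funext v; show a + b + v = a + (b + v); rw [add_assoc]
    rw [h1, Set.image_comp, hb', ha']
  smul_mem' := by
    intro c x hx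
    rcases zc c with rfl | rfl
    · rw [zero_smul]; exact zero_mem_kernel
    · rwa [one_smul]

lemma NN_mem_Igrp (hg : IsCircHadGen n g) {i₀ : ZMod (4 * n)}
    (hi₀ : i₀ ∈ Igrp n g) (hne : i₀ ≠ 0) : NN n ∈ Igrp n g := by
  classical
  haveI : Fintype (Igrp n g) := Fintype.ofFinite _
  haveI : Fintype (Ksub n g) := Fintype.ofFinite _
  have hbij : Function.Bijective (fun p : (Igrp n g) × ZMod 2 =>
      (⟨hv n g ↑p.1 + p.2 • allOne (4 * n), kernel_of_rep p.1.2 p.2⟩ : Ksub n g)) := by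
    constructor
    · rintro ⟨⟨i, hi⟩, ξ⟩ ⟨⟨i', hi'⟩, ξ'⟩ hp
      obtain ⟨h1, h2⟩ := rep_unique hg (Subtype.ext_iff.mp hp)
      simp only [Prod.ext_iff, Subtype.ext_iff]
      exact ⟨h1, h2⟩
    · rintro ⟨x, hx⟩
      obtain ⟨i, hi, ξ, hxe⟩ := kernel_rep hx
      exact ⟨⟨⟨i, hi⟩, ξ⟩, by simp only [Subtype.ext_iff]; exact hxe.symm⟩
  have hcard : Fintype.card (Ksub n g) = Fintype.card (Igrp n g) * 2 := by
    rw [← Fintype.card_of_bijective hbij, Fintype.card_prod, ZMod.card]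
  have h2le : 2 ≤ Fintype.card (Igrp n g) := by
    rw [show (2 : ℕ) = 1 + 1 by rfl, Nat.add_one_le_iff]
    apply Fintype.one_lt_card_iff_nontrivial.mpr
    exact ⟨⟨⟨i₀, hi₀⟩, ⟨0, (Igrp n g).zero_mem⟩, by simp [Subtype.ext_iff, hne]⟩⟩
  have hprime2 : ∀ p : ℕ, p.Prime → p ∣ Fintype.card (Igrp n g) → p = 2 := by
    intro p hp hdvd
    haveI : Fact p.Prime := ⟨hp⟩
    have hdvdK : p ∣ Fintype.card (Ksub n g) := by
      rw [hcard]; exact hdvd.mul_right 2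
    obtain ⟨y, hy⟩ := exists_prime_addOrderOf_dvd_card (G := Ksub n g) p hdvdK
    have hyy : (2 : ℕ) • y = 0 := by
      rw [two_nsmul]
      apply Subtype.ext
      show (y : ZMod (4 * n) → ZMod 2) + (y : ZMod (4 * n) → ZMod 2) = 0
      funext t
      exact zaa _
    have : p ∣ 2 := by
      rw [← hy]
      exact addOrderOf_dvd_of_nsmul_eq_zero hyy
    exact (Nat.prime_dvd_prime_iff_eq hp Nat.prime_two).mp this
  have h2dvd : 2 ∣ Fintype.card (Igrp n g) := by
    have hne1 : Fintype.card (Igrp n g) ≠ 1 := by omega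
    have hmf := Nat.minFac_prime hne1
    have := hprime2 _ hmf (Nat.minFac_dvd _)
    rw [← this]
    exact Nat.minFac_dvd _
  haveI : Fact (Nat.Prime 2) := ⟨Nat.prime_two⟩
  obtain ⟨y, hy⟩ := exists_prime_addOrderOf_dvd_card (G := Igrp n g) 2 h2dvd
  have hyne : (y : ZMod (4 * n)) ≠ 0 := by
    intro h0
    have hy0 : y = 0 := Subtype.ext (by simpa using h0)
    rw [hy0] at hy
    simp [addOrderOf_zero] at hy
  have hyy : (y : ZMod (4 * n)) + (y : ZMod (4 * n)) = 0 := by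
    have h2 : (2 : ℕ) • y = 0 := by rw [← hy]; exact addOrderOf_nsmul_eq_zero y
    have h3 := congrArg (Subtype.val) h2
    rw [two_nsmul] at h3
    simpa using h3
  rcases twoTorsion hyy with h | h
  · exact absurd h hyne
  · rw [← h]; exact y.2

end CHK
namespace CHK
set_option linter.unusedSectionVars false

variable {n : ℕ} [NeZero n] {g : ZMod (4 * n) → ZMod 2}

/-- `b = (1 + x^{2n}) g` -/
def bb (n : ℕ) (g : ZMod (4 * n) → ZMod 2) : ZMod (4 * n) → ZMod 2 := hv n g (NN n)

lemma smul_allOne_apply (c : ZMod 2) (t : ZMod (4 * n)) : (c • allOne (4 * n)) t = c := by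
  show c • (1 : ZMod 2) = c
  rw [smul_eq_mul, mul_one]

lemma sub_NN (t : ZMod (4 * n)) : t - NN n = t + NN n := by
  rw [sub_eq_add_neg, neg_NN]

lemma bb_apply' (t : ZMod (4 * n)) : bb n g t = g t + g (t + NN n) := by
  show g t + g (t - NN n) = g t + g (t + NN n)
  rw [sub_NN]

lemma g_add_NN (s : ZMod (4 * n)) : g (s + NN n) = g s + bb n g s := by
  rw [bb_apply']
  have : ∀ a b : ZMod 2, b = a + (a + b) := by decide
  exact this _ _

/-- the kernel equation family -/
def EE (n : ℕ) (g : ZMod (4 * n) → ZMod 2) (j k : ZMod (4 * n)) (δ : ZMod 2) : Prop :=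
  shift (4 * n) j g + shift (4 * n) k g = bb n g + δ • allOne (4 * n)

lemma EE_pointwise {j k : ZMod (4 * n)} {δ : ZMod 2} (h : EE n g j k δ) (t : ZMod (4 * n)) :
    g (t - j) + g (t - k) = (g t + g (t - NN n)) + δ := by
  have h1 : g (t - j) + g (t - k)
      = (g t + g (t - NN n)) + (δ • allOne (4 * n)) t := congrFun h t
  rwa [smul_allOne_apply] at h1

lemma EE_exists (hNN : NN n ∈ Igrp n g) (j : ZMod (4 * n)) :
    ∃ k : ZMod (4 * n), ∃ δ : ZMod 2, EE n g j k δ := by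
  obtain ⟨k, δ, heq⟩ := Igrp_to hNN j
  refine ⟨k, δ, funext fun t => ?_⟩
  have h1 : (g t + g (t - NN n)) + (g t + g (t - j))
      = (g t + g (t - k)) + (δ • allOne (4 * n)) t := congrFun heq t
  rw [smul_allOne_apply] at h1
  show g (t - j) + g (t - k) = (g t + g (t - NN n)) + (δ • allOne (4 * n)) t
  rw [smul_allOne_apply]
  have L1 : ∀ a p q r d : ZMod 2, (a + p) + (a + q) = (a + r) + d → q + r = (a + p) + d := by
    decide
  exact L1 _ _ _ _ _ h1

lemma EE_unique (hg : IsCircHadGen n g) {j k k' : ZMod (4 * n)} {δ δ' : ZMod 2}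
    (h : EE n g j k δ) (h' : EE n g j k' δ') : k = k' ∧ δ = δ' := by
  have key : shift (4 * n) k g + shift (4 * n) k' g = (δ + δ') • allOne (4 * n) := by
    funext t
    have h1 := EE_pointwise h t
    have h2 := EE_pointwise h' t
    show g (t - k) + g (t - k') = ((δ + δ') • allOne (4 * n)) t
    rw [smul_allOne_apply]
    have L2 : ∀ q r r' B d d' : ZMod 2,
        q + r = B + d → q + r' = B + d' → r + r' = d + d' := by decide
    exact L2 _ _ _ _ _ _ h1 h2
  obtain ⟨hk, hδ⟩ := U hg key
  refine ⟨hk, ?_⟩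
  have : ∀ c d : ZMod 2, c + d = 0 → c = d := by decide
  exact this _ _ hδ

lemma EE_symm {j k : ZMod (4 * n)} {δ : ZMod 2} (h : EE n g j k δ) : EE n g k j δ := by
  show shift (4 * n) k g + shift (4 * n) j g = _
  rw [add_comm]
  exact h

lemma shift_NN_bb : shift (4 * n) (NN n) (bb n g) = bb n g := by
  show shift (4 * n) (NN n) (g + shift (4 * n) (NN n) g) = _
  rw [shift_add, shift_shift, NN_add_NN, shift_zero]
  show shift (4 * n) (NN n) g + g = g + shift (4 * n) (NN n) g
  exact add_comm _ _

lemma EE_shift {j k : ZMod (4 * n)} {δ : ZMod 2} (p : ZMod (4 * n))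
    (hp : shift (4 * n) p (bb n g) = bb n g) (h : EE n g j k δ) :
    EE n g (j + p) (k + p) δ := by
  have h2 := congrArg (shift (4 * n) p) h
  rw [shift_add, shift_shift, shift_shift, shift_add, shift_smul, shift_allOne, hp] at h2
  show shift (4 * n) (j + p) g + shift (4 * n) (k + p) g = _
  rw [show j + p = p + j by ring, show k + p = p + k by ring]
  exact h2

lemma EE_period {j k : ZMod (4 * n)} {δ : ZMod 2} (h : EE n g j k δ) :
    shift (4 * n) j (bb n g) = shift (4 * n) k (bb n g) := by
  have h2 := EE_shift (NN n) shift_NN_bb h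
  funext t
  have h1 := EE_pointwise h t
  have h1' := EE_pointwise h2 t
  rw [sub_add_eq_sub_sub, sub_add_eq_sub_sub] at h1'
  show g (t - j) + g (t - j - NN n) = g (t - k) + g (t - k - NN n)
  have L3 : ∀ A B A' B' X : ZMod 2, A + B = X → A' + B' = X → A + A' = B + B' := by decide
  exact L3 _ _ _ _ _ h1 h1'

lemma period_of {j k : ZMod (4 * n)}
    (h : shift (4 * n) j (bb n g) = shift (4 * n) k (bb n g)) :
    shift (4 * n) (k - j) (bb n g) = bb n g := by
  have h2 := congrArg (shift (4 * n) (-j)) h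
  rw [shift_shift, shift_shift, neg_add_cancel, shift_zero] at h2
  rw [show (-j : ZMod (4 * n)) + k = k - j by ring] at h2
  exact h2.symm

lemma EE_k (hg : IsCircHadGen n g) {j k : ZMod (4 * n)} {δ : ZMod 2}
    (h : EE n g j k δ) : k = j + NN n := by
  have hper' : shift (4 * n) (k - j) (bb n g) = bb n g := period_of (EE_period h)
  have h2 : EE n g (j + (k - j)) (k + (k - j)) δ := EE_shift _ hper' h
  rw [show j + (k - j) = k by ring] at h2
  have h3 := EE_symm h
  obtain ⟨hk, _⟩ := EE_unique hg h2 h3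
  have h4 : (k - j) + (k - j) = 0 := by linear_combination hk
  rcases twoTorsion h4 with h0 | h0
  · exfalso
    have hkj : k = j := by linear_combination h0
    subst hkj
    have key : shift (4 * n) 0 g + shift (4 * n) (NN n) g = δ • allOne (4 * n) := by
      funext t
      have h1 := EE_pointwise h t
      show g (t - 0) + g (t - NN n) = (δ • allOne (4 * n)) t
      rw [smul_allOne_apply, sub_zero]
      have L4 : ∀ a x d : ZMod 2, a + a = x + d → x = d := by decide
      exact L4 _ _ _ h1
    obtain ⟨h0', _⟩ := U hg key
    exact NN_ne_zero h0'.symm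
  · linear_combination h0

lemma sigma_bb (hg : IsCircHadGen n g) (hNN : NN n ∈ Igrp n g) (j : ZMod (4 * n)) :
    ∃ δ : ZMod 2, shift (4 * n) j (bb n g) = bb n g + δ • allOne (4 * n) := by
  obtain ⟨k, δ, h⟩ := EE_exists hNN j
  have hk := EE_k hg h
  subst hk
  refine ⟨δ, ?_⟩
  have h1 : shift (4 * n) j (bb n g)
      = shift (4 * n) j g + shift (4 * n) (j + NN n) g := by
    show shift (4 * n) j (g + shift (4 * n) (NN n) g) = _
    rw [shift_add, shift_shift]
  rw [h1]
  exact h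

lemma bb_alternating (hg : IsCircHadGen n g) (hNN : NN n ∈ Igrp n g) :
    ∀ t, bb n g (t + 1) = bb n g t + 1 := by
  obtain ⟨δ, h⟩ := sigma_bb hg hNN 1
  rcases zc δ with rfl | rfl
  · exfalso
    rw [zero_smul, add_zero] at h
    have hstep : ∀ t, bb n g (t + 1) = bb n g t := by
      intro t
      have h1 := congrFun h (t + 1)
      rw [shift_apply, add_sub_cancel_right] at h1
      exact h1.symm
    have hconst : ∀ t, bb n g t = bb n g 0 := by
      have haux : ∀ k : ℕ, bb n g ((k : ℕ) : ZMod (4 * n)) = bb n g 0 := by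
        intro k
        induction k with
        | zero => norm_num
        | succ m ih =>
            rw [show (((m + 1 : ℕ)) : ZMod (4 * n)) = ((m : ℕ) : ZMod (4 * n)) + 1 by
              push_cast; ring, hstep, ih]
      intro t
      have := haux t.val
      rwa [ZMod.natCast_zmod_val] at this
    have key : shift (4 * n) 0 g + shift (4 * n) (NN n) g = (bb n g 0) • allOne (4 * n) := by
      funext t
      show g (t - 0) + g (t - NN n) = ((bb n g 0) • allOne (4 * n)) t
      rw [smul_allOne_apply, sub_zero]
      exact hconst t
    obtain ⟨h0', _⟩ := U hg key
    exact NN_ne_zero h0'.symm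
  · intro t
    have h1 := congrFun h (t + 1)
    rw [shift_apply, add_sub_cancel_right] at h1
    have h2 : (bb n g + (1 : ZMod 2) • allOne (4 * n)) (t + 1) = bb n g (t + 1) + 1 := by
      show bb n g (t + 1) + ((1 : ZMod 2) • allOne (4 * n)) (t + 1) = _
      rw [smul_allOne_apply]
    rw [h2] at h1
    have : ∀ a b : ZMod 2, a = b + 1 → b = a + 1 := by decide
    exact this _ _ h1

lemma bb_two (halt : ∀ t, bb n g (t + 1) = bb n g t + 1) (t : ZMod (4 * n)) :
    bb n g (t + 2) = bb n g t := by
  have h1 := halt (t + 1)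
  have h2 := halt t
  rw [show t + 1 + 1 = t + 2 by ring] at h1
  rw [h2] at h1
  rw [h1]
  have : ∀ a : ZMod 2, a + 1 + 1 = a := by decide
  exact this _

/-- parity homomorphism -/
def pr (n : ℕ) : ZMod (4 * n) →+* ZMod 2 := ZMod.castHom (show (2:ℕ) ∣ 4 * n from ⟨2 * n, by ring⟩) (ZMod 2)

lemma pr_natCast (k : ℕ) : pr n ((k : ℕ) : ZMod (4 * n)) = (k : ZMod 2) := map_natCast _ k

lemma pr_one : pr n (1 : ZMod (4 * n)) = 1 := map_one _

lemma pr_NN : pr n (NN n) = 0 := by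
  rw [NN, pr_natCast, Nat.cast_mul]
  rw [show ((2 : ℕ) : ZMod 2) = 0 by decide, zero_mul]

lemma pr_val (x : ZMod (4 * n)) : pr n x = ((x.val : ℕ) : ZMod 2) := by
  conv_lhs => rw [← ZMod.natCast_zmod_val x]
  rw [pr_natCast]

lemma bb_pr (halt : ∀ t, bb n g (t + 1) = bb n g t + 1) (t : ZMod (4 * n)) :
    bb n g t = bb n g 0 + pr n t := by
  have haux : ∀ k : ℕ, bb n g ((k : ℕ) : ZMod (4 * n)) = bb n g 0 + ((k : ℕ) : ZMod 2) := by
    intro k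
    induction k with
    | zero => norm_num
    | succ m ih =>
        rw [show (((m + 1 : ℕ)) : ZMod (4 * n)) = ((m : ℕ) : ZMod (4 * n)) + 1 by
          push_cast; ring, halt, ih]
        push_cast
        ring
  have := haux t.val
  rwa [ZMod.natCast_zmod_val, ← pr_val] at this

end CHK
namespace CHK
set_option linter.unusedSectionVars false

variable {n : ℕ} [NeZero n] {g : ZMod (4 * n) → ZMod 2}


lemma filter_card_congr {P Q : ZMod (4 * n) → Prop} [DecidablePred P] [DecidablePred Q]
    (h : ∀ t, P t ↔ Q t) :
    (Finset.univ.filter P).card = (Finset.univ.filter Q).card := by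
  congr 1
  exact Finset.filter_congr (fun t _ => h t)

lemma Dcount (hg : IsCircHadGen n g) {i : ZMod (4 * n)} (hi : i ≠ 0) :
    (Finset.univ.filter fun t => g t ≠ g (t + i)).card = 2 * n := by
  have h0 : (0 : ZMod (4 * n)) ≠ -i := by
    intro h
    apply hi
    rw [← neg_neg i, ← h, neg_zero]
  have hd := hg 0 (-i) h0
  rw [shift_zero, hammingDist_eq] at hd
  rw [← hd]
  apply filter_card_congr
  intro t
  rw [shift_apply, sub_neg_eq_add]

lemma class_card (c : ZMod 2) :
    (Finset.univ.filter fun t : ZMod (4 * n) => pr n t = c).card = 2 * n := by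
  have hbij : ∀ c : ZMod 2, (Finset.univ.filter fun t : ZMod (4 * n) => pr n t = c).card
      = (Finset.univ.filter fun t : ZMod (4 * n) => pr n t = c + 1).card := by
    intro c
    apply Finset.card_bij (fun t _ => t + 1)
    · intro a ha
      simp only [Finset.mem_filter, Finset.mem_univ, true_and] at ha ⊢
      rw [map_add, ha, pr_one]
    · intro a _ b _ hab
      exact add_right_cancel hab
    · intro b hb
      simp only [Finset.mem_filter, Finset.mem_univ, true_and] at hb
      refine ⟨b - 1, ?_, by ring⟩
      simp only [Finset.mem_filter, Finset.mem_univ, true_and]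
      rw [map_sub, hb, pr_one]
      ring
  have htot : (Finset.univ.filter fun t : ZMod (4 * n) => pr n t = 0).card
      + (Finset.univ.filter fun t : ZMod (4 * n) => pr n t = 1).card = 4 * n := by
    have hsplit := Finset.card_filter_add_card_filter_not
      (s := (Finset.univ : Finset (ZMod (4 * n)))) (p := fun t => pr n t = 0)
    rw [Finset.card_univ, ZMod.card] at hsplit
    have h2 : (Finset.univ.filter fun t : ZMod (4 * n) => pr n t = 1).card
        = (Finset.univ.filter fun a : ZMod (4 * n) => ¬ pr n a = 0).card := by
      apply filter_card_congr
      intro t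
      revert t
      intro t
      have : ∀ a : ZMod 2, (a = 1) ↔ ¬(a = 0) := by decide
      exact this _
    rw [h2]
    exact hsplit
  have h01 := hbij 0
  rw [zero_add] at h01
  rcases zc c with rfl | rfl <;> omega

lemma split_class (P : ZMod (4 * n) → Prop) [DecidablePred P] :
    (Finset.univ.filter P).card
      = (Finset.univ.filter fun t => P t ∧ pr n t = 0).card
        + (Finset.univ.filter fun t => P t ∧ pr n t = 1).card := by
  have hsplit := Finset.card_filter_add_card_filter_not
    (s := Finset.univ.filter P) (p := fun t => pr n t = 0)
  rw [Finset.filter_filter, Finset.filter_filter] at hsplit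
  have h2 : (Finset.univ.filter fun t => P t ∧ pr n t = 1).card
      = (Finset.univ.filter fun a => P a ∧ ¬ pr n a = 0).card := by
    apply filter_card_congr
    intro t
    have h1 : ∀ a : ZMod 2, (a = 1) ↔ ¬(a = 0) := by decide
    exact and_congr_right fun _ => h1 _
  rw [h2]
  exact hsplit.symm

/-- the per-class mismatch counts -/
def Xc (n : ℕ) [NeZero n] (g : ZMod (4 * n) → ZMod 2) (c : ZMod 2) : ℕ :=
  (Finset.univ.filter fun t => (g t ≠ g (t + 2)) ∧ pr n t = c).card

lemma class_split_mis (c : ZMod 2) :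
    Xc n g c + (Finset.univ.filter fun t => (g t = g (t + 2)) ∧ pr n t = c).card = 2 * n := by
  have hsplit := Finset.card_filter_add_card_filter_not
    (s := Finset.univ.filter fun t : ZMod (4 * n) => pr n t = c) (p := fun t => g t ≠ g (t + 2))
  rw [Finset.filter_filter, Finset.filter_filter, class_card] at hsplit
  have e1 : Xc n g c = (Finset.univ.filter fun t : ZMod (4 * n) => pr n t = c ∧ g t ≠ g (t + 2)).card := by
    apply filter_card_congr
    intro t
    exact and_comm
  have e2 : (Finset.univ.filter fun t : ZMod (4 * n) => (g t = g (t + 2)) ∧ pr n t = c).card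
      = (Finset.univ.filter fun a : ZMod (4 * n) => pr n a = c ∧ ¬ g a ≠ g (a + 2)).card := by
    apply filter_card_congr
    intro t
    constructor
    · rintro ⟨h1, h2⟩; exact ⟨h2, not_not.mpr h1⟩
    · rintro ⟨h1, h2⟩; exact ⟨not_not.mp h2, h1⟩
  rw [e1, e2]
  exact hsplit

lemma Xeq (hg : IsCircHadGen n g) (hn2 : 2 ≤ n)
    (halt : ∀ t, bb n g (t + 1) = bb n g t + 1) : Xc n g 0 = Xc n g 1 := by
  have halt2 := bb_two (n := n) (g := g) halt
  have h2N : ((2 : ZMod (4 * n)) + NN n) ≠ 0 := by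
    have he : (2 : ZMod (4 * n)) + NN n = ((2 + 2 * n : ℕ) : ZMod (4 * n)) := by
      rw [NN]; push_cast; ring
    rw [he, Ne, ZMod.natCast_eq_zero_iff]
    intro hdvd
    have := Nat.le_of_dvd (by omega) hdvd
    omega
  have hD := Dcount hg h2N
  rw [split_class] at hD
  have hpt : ∀ t : ZMod (4 * n),
      g (t + ((2 : ZMod (4 * n)) + NN n)) = g (t + 2) + (bb n g 0 + pr n t) := by
    intro t
    rw [← add_assoc, g_add_NN (g := g) (t + 2), halt2 t, bb_pr halt t]
  have htrans : ∀ c : ZMod 2,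
      (Finset.univ.filter fun t => (g t ≠ g (t + ((2 : ZMod (4 * n)) + NN n))) ∧ pr n t = c).card
      = (Finset.univ.filter fun t => (g t ≠ g (t + 2) + (bb n g 0 + c)) ∧ pr n t = c).card := by
    intro c
    apply filter_card_congr
    intro t
    constructor
    · rintro ⟨h1, h2⟩
      rw [hpt t, h2] at h1
      exact ⟨h1, h2⟩
    · rintro ⟨h1, h2⟩
      refine ⟨?_, h2⟩
      rw [hpt t, h2]
      exact h1
  rw [htrans 0, htrans 1] at hD
  have hne_iff : ∀ x y : ZMod 2, (x ≠ y + 1) ↔ x = y := by decide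
  rcases zc (bb n g 0) with hb0 | hb0 <;> rw [hb0] at hD
  · -- class 0 keeps mismatch, class 1 flips
    have e0 : (Finset.univ.filter fun t =>
        (g t ≠ g (t + 2) + ((0 : ZMod 2) + 0)) ∧ pr n t = 0).card = Xc n g 0 := by
      unfold Xc
      apply filter_card_congr
      intro t
      rw [add_zero, add_zero]
    have e1 : (Finset.univ.filter fun t =>
        (g t ≠ g (t + 2) + ((0 : ZMod 2) + 1)) ∧ pr n t = 1).card
        = (Finset.univ.filter fun t => (g t = g (t + 2)) ∧ pr n t = 1).card := by
      apply filter_card_congr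
      intro t
      rw [zero_add]
      constructor
      · rintro ⟨h1, h2⟩; exact ⟨(hne_iff _ _).mp h1, h2⟩
      · rintro ⟨h1, h2⟩; exact ⟨(hne_iff _ _).mpr h1, h2⟩
    rw [e0, e1] at hD
    have hs := class_split_mis (n := n) (g := g) 1
    omega
  · -- bb0 = 1 : class 0 flips, class 1 keeps
    have e0 : (Finset.univ.filter fun t =>
        (g t ≠ g (t + 2) + ((1 : ZMod 2) + 0)) ∧ pr n t = 0).card
        = (Finset.univ.filter fun t => (g t = g (t + 2)) ∧ pr n t = 0).card := by
      apply filter_card_congr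
      intro t
      rw [add_zero]
      constructor
      · rintro ⟨h1, h2⟩; exact ⟨(hne_iff _ _).mp h1, h2⟩
      · rintro ⟨h1, h2⟩; exact ⟨(hne_iff _ _).mpr h1, h2⟩
    have e1 : (Finset.univ.filter fun t =>
        (g t ≠ g (t + 2) + ((1 : ZMod 2) + 1)) ∧ pr n t = 1).card = Xc n g 1 := by
      unfold Xc
      apply filter_card_congr
      intro t
      rw [show (1 : ZMod 2) + 1 = 0 by decide, add_zero]
    rw [e0, e1] at hD
    have hs := class_split_mis (n := n) (g := g) 0
    omega

end CHK
namespace CHK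
set_option linter.unusedSectionVars false

variable {n : ℕ} [NeZero n] {g : ZMod (4 * n) → ZMod 2}

lemma filter_card_congr' {α : Type*} {s : Finset α} {P Q : α → Prop}
    [DecidablePred P] [DecidablePred Q] (h : ∀ t, P t ↔ Q t) :
    (s.filter P).card = (s.filter Q).card := by
  congr 1
  exact Finset.filter_congr (fun t _ => h t)

/-- half-window mismatch count -/
def WC (n : ℕ) [NeZero n] (g : ZMod (4 * n) → ZMod 2) (ρ : ZMod (4 * n)) : ℕ :=
  ((Finset.range n).filter fun s =>
    g (ρ + ((2 * s : ℕ) : ZMod (4 * n))) ≠ g (ρ + ((2 * s : ℕ) : ZMod (4 * n)) + 2)).card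

lemma even_cast_pr (s : ℕ) : pr n (((2 * s : ℕ) : ZMod (4 * n))) = 0 := by
  rw [pr_natCast, Nat.cast_mul, show ((2 : ℕ) : ZMod 2) = 0 by decide, zero_mul]

lemma Whalf (ρ : ZMod (4 * n)) :
    (Finset.univ.filter fun t => (g t ≠ g (t + 2)) ∧ pr n t = pr n ρ).card
      = WC n g ρ + WC n g (ρ + NN n) := by
  have stepA : ((Finset.range (2 * n)).filter fun s =>
      g (ρ + ((2 * s : ℕ) : ZMod (4 * n))) ≠ g (ρ + ((2 * s : ℕ) : ZMod (4 * n)) + 2)).card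
      = (Finset.univ.filter fun t => (g t ≠ g (t + 2)) ∧ pr n t = pr n ρ).card := by
    apply Finset.card_bij (fun s _ => ρ + ((2 * s : ℕ) : ZMod (4 * n)))
    · intro a ha
      simp only [Finset.mem_filter, Finset.mem_range, Finset.mem_univ, true_and] at ha ⊢
      refine ⟨ha.2, ?_⟩
      rw [map_add, even_cast_pr, add_zero]
    · intro a ha b hb hab
      simp only [Finset.mem_filter, Finset.mem_range] at ha hb
      have h1 : ((2 * a : ℕ) : ZMod (4 * n)) = ((2 * b : ℕ) : ZMod (4 * n)) :=
        add_left_cancel hab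
      rw [ZMod.natCast_eq_natCast_iff'] at h1
      rw [Nat.mod_eq_of_lt (by omega), Nat.mod_eq_of_lt (by omega)] at h1
      omega
    · intro t ht
      simp only [Finset.mem_filter, Finset.mem_univ, true_and] at ht
      obtain ⟨hmis, hcl⟩ := ht
      have hzero : pr n (t - ρ) = 0 := by
        rw [map_sub, hcl, sub_self]
      have hdvd : 2 ∣ (t - ρ).val := by
        rw [pr_val] at hzero
        rwa [ZMod.natCast_eq_zero_iff] at hzero
      obtain ⟨s, hs⟩ := hdvd
      have hlt : (t - ρ).val < 4 * n := ZMod.val_lt _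
      have hcast : ((2 * s : ℕ) : ZMod (4 * n)) = t - ρ := by
        rw [← hs, ZMod.natCast_zmod_val]
      refine ⟨s, ?_, ?_⟩
      · simp only [Finset.mem_filter, Finset.mem_range]
        constructor
        · omega
        · rw [hcast, show ρ + (t - ρ) = t by ring]
          exact hmis
      · rw [hcast]; ring
  have stepB : ((Finset.range (2 * n)).filter fun s =>
      g (ρ + ((2 * s : ℕ) : ZMod (4 * n))) ≠ g (ρ + ((2 * s : ℕ) : ZMod (4 * n)) + 2)).card
      = WC n g ρ + WC n g (ρ + NN n) := by
    rw [Finset.card_filter, show 2 * n = n + n by ring, Finset.sum_range_add]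
    congr 1
    · rw [WC, Finset.card_filter]
    · rw [WC, Finset.card_filter]
      apply Finset.sum_congr rfl
      intro s _
      have he : ρ + ((2 * (n + s) : ℕ) : ZMod (4 * n))
          = (ρ + NN n) + ((2 * s : ℕ) : ZMod (4 * n)) := by
        rw [NN]
        push_cast
        ring
      rw [he]
  rw [← stepA, stepB]

lemma Wshift (halt2 : ∀ t, bb n g (t + 2) = bb n g t) (ρ : ZMod (4 * n)) :
    WC n g (ρ + NN n) = WC n g ρ := by
  unfold WC
  apply filter_card_congr'
  intro s
  have e1 : ρ + NN n + ((2 * s : ℕ) : ZMod (4 * n))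
      = (ρ + ((2 * s : ℕ) : ZMod (4 * n))) + NN n := by ring
  have e2 : ρ + NN n + ((2 * s : ℕ) : ZMod (4 * n)) + 2
      = (ρ + ((2 * s : ℕ) : ZMod (4 * n)) + 2) + NN n := by ring
  rw [e2, e1, g_add_NN (g := g), g_add_NN (g := g), halt2]
  have : ∀ a b e : ZMod 2, (a + e ≠ b + e) ↔ (a ≠ b) := by decide
  exact this _ _ _

lemma Wpar (ρ : ZMod (4 * n)) :
    ((WC n g ρ : ℕ) : ZMod 2) = g ρ + g (ρ + NN n) := by
  unfold WC
  rw [Finset.card_filter, Nat.cast_sum]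
  have hterm : ∀ s : ℕ,
      (((if g (ρ + ((2 * s : ℕ) : ZMod (4 * n))) ≠ g (ρ + ((2 * s : ℕ) : ZMod (4 * n)) + 2)
        then (1 : ℕ) else 0) : ℕ) : ZMod 2)
      = g (ρ + ((2 * s : ℕ) : ZMod (4 * n))) + g (ρ + ((2 * (s + 1) : ℕ) : ZMod (4 * n))) := by
    intro s
    have he : ρ + ((2 * (s + 1) : ℕ) : ZMod (4 * n))
        = ρ + ((2 * s : ℕ) : ZMod (4 * n)) + 2 := by push_cast; ring
    rw [he, apply_ite (fun k : ℕ => (k : ZMod 2)), Nat.cast_one, Nat.cast_zero]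
    have : ∀ a b : ZMod 2, (if a ≠ b then (1 : ZMod 2) else 0) = a + b := by decide
    exact this _ _
  rw [Finset.sum_congr rfl (fun s _ => hterm s)]
  have htel : ∀ (F : ℕ → ZMod 2) (m : ℕ),
      (∑ s ∈ Finset.range m, (F s + F (s + 1))) = F 0 + F m := by
    intro F m
    induction m with
    | zero => rw [Finset.range_zero, Finset.sum_empty]; exact (zaa _).symm
    | succ m ih =>
        rw [Finset.sum_range_succ, ih]
        have : ∀ a b c : ZMod 2, (a + b) + (b + c) = a + c := by decide
        exact this _ _ _
  rw [htel (fun s => g (ρ + ((2 * s : ℕ) : ZMod (4 * n))))]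
  rw [show ((2 * 0 : ℕ) : ZMod (4 * n)) = 0 by norm_num, add_zero]
  rfl

lemma no_alternating (hg : IsCircHadGen n g) (hn2 : 2 ≤ n)
    (halt : ∀ t, bb n g (t + 1) = bb n g t + 1) : False := by
  have halt2 := bb_two (n := n) (g := g) halt
  have hpr0 : pr n (0 : ZMod (4 * n)) = (0 : ZMod 2) := map_zero _
  have hpr1 : pr n (1 : ZMod (4 * n)) = 1 := pr_one
  have hW0 : Xc n g 0 = 2 * WC n g 0 := by
    have h1 := Whalf (g := g) (ρ := 0)
    rw [hpr0] at h1
    rw [Wshift halt2 0] at h1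
    rw [Xc, h1]
    ring
  have hW1 : Xc n g 1 = 2 * WC n g 1 := by
    have h1 := Whalf (g := g) (ρ := 1)
    rw [hpr1] at h1
    rw [Wshift halt2 1] at h1
    rw [Xc, h1]
    ring
  have hXeq := Xeq hg hn2 halt
  have hWeq : WC n g 0 = WC n g 1 := by omega
  have hp0 := Wpar (g := g) (ρ := 0)
  have hp1 := Wpar (g := g) (ρ := 1)
  rw [hWeq] at hp0
  rw [hp1] at hp0
  -- hp0 : g 1 + g (1 + N) = g 0 + g (0 + N)
  have hbb0 : g (0 : ZMod (4 * n)) + g (0 + NN n) = bb n g 0 := (bb_apply' 0).symm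
  have hbb1 : g (1 : ZMod (4 * n)) + g (1 + NN n) = bb n g 1 := (bb_apply' 1).symm
  rw [hbb0, hbb1] at hp0
  have hb01 := halt 0
  rw [zero_add] at hb01
  rw [hb01] at hp0
  have : ∀ a : ZMod 2, a + 1 ≠ a := by decide
  exact this _ hp0

end CHK
namespace CHK
set_option linter.unusedSectionVars false

variable {n : ℕ} [NeZero n] {g : ZMod (4 * n) → ZMod 2}

lemma allOne_ne_zero : allOne (4 * n) ≠ (0 : ZMod (4 * n) → ZMod 2) := by
  intro h
  have h0 : (1 : ZMod 2) = 0 := congrFun h 0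
  exact absurd h0 (by decide)

lemma n_one_case (hn1 : n = 1) (halt : ∀ t, bb n g (t + 1) = bb n g t + 1) :
    ∃ W : Submodule (ZMod 2) (ZMod (4 * n) → ZMod 2), (W : Set _) = codeSet n g := by
  have h2NN : ((2 : ℕ) : ZMod (4 * n)) = NN n := by
    rw [NN]
    exact congrArg _ (by omega)
  have h3NN : ((3 : ℕ) : ZMod (4 * n)) = NN n + 1 := by
    rw [NN, show (3 : ℕ) = 2 * n + 1 by omega]
    push_cast
    ring
  have h1mem : (1 : ZMod (4 * n)) ∈ Igrp n g := by
    apply Igrp_of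
    intro j
    have hval : j.val < 4 := by
      have := ZMod.val_lt j
      omega
    have hj : j = ((j.val : ℕ) : ZMod (4 * n)) := (ZMod.natCast_zmod_val j).symm
    have hcase : j.val = 0 ∨ j.val = 1 ∨ j.val = 2 ∨ j.val = 3 := by omega
    rcases hcase with h | h | h | h <;> rw [h] at hj <;> rw [hj]
    · -- j = 0
      rw [Nat.cast_zero, hv_zero, add_zero]
      exact ⟨1, 0, by simp⟩
    · -- j = 1
      rw [Nat.cast_one]
      have hself : hv n g 1 + hv n g 1 = 0 := funext fun t => zaa _
      rw [hself]
      exact zero_mem_code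
    · -- j = 2 = NN n
      rw [h2NN]
      refine ⟨NN n + 1, 1, funext fun t => ?_⟩
      show (g t + g (t - 1)) + (g t + g (t - NN n))
          = (g t + g (t - (NN n + 1))) + ((1 : ZMod 2) • allOne (4 * n)) t
      rw [smul_allOne_apply, sub_NN, g_add_NN (g := g) t,
        show t - (NN n + 1) = (t - 1) - NN n by ring, sub_NN, g_add_NN (g := g) (t - 1)]
      have hb : bb n g t = bb n g (t - 1) + 1 := by
        have hh := halt (t - 1)
        rwa [show t - 1 + 1 = t by ring] at hh
      rw [hb]
      have key : ∀ x y q : ZMod 2, (x + y) + (x + (x + (q + 1))) = (x + (y + q)) + 1 := by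
        decide
      exact key _ _ _
    · -- j = 3 = NN n + 1
      rw [h3NN]
      refine ⟨NN n, 1, funext fun t => ?_⟩
      show (g t + g (t - 1)) + (g t + g (t - (NN n + 1)))
          = (g t + g (t - NN n)) + ((1 : ZMod 2) • allOne (4 * n)) t
      rw [smul_allOne_apply, sub_NN, g_add_NN (g := g) t,
        show t - (NN n + 1) = (t - 1) - NN n by ring, sub_NN, g_add_NN (g := g) (t - 1)]
      have hb : bb n g t = bb n g (t - 1) + 1 := by
        have hh := halt (t - 1)
        rwa [show t - 1 + 1 = t by ring] at hh
      rw [hb]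
      have key : ∀ x y q : ZMod 2, (x + y) + (x + (y + q)) = (x + (x + (q + 1))) + 1 := by
        decide
      exact key _ _ _
  refine ⟨Ksub n g, ?_⟩
  apply subset_antisymm
  · intro x hx
    exact kernel_mem_code hx
  · intro v hvm
    obtain ⟨i, ξ, rfl⟩ := hvm
    have hsmul : (i.val : ℕ) • (1 : ZMod (4 * n)) = i := by
      rw [nsmul_eq_mul, mul_one, ZMod.natCast_zmod_val]
    have hiI : i ∈ Igrp n g := by
      rw [← hsmul]
      exact nsmul_mem h1mem _
    exact kernel_of_rep hiI ξ

lemma main_kernel (hg : IsCircHadGen n g)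
    (hnl : ¬ ∃ W : Submodule (ZMod 2) (ZMod (4 * n) → ZMod 2), (W : Set _) = codeSet n g) :
    kernelOf (codeSet n g) = {0, allOne (4 * n)} := by
  apply subset_antisymm
  · intro x hx
    obtain ⟨i, hi, ξ, rfl⟩ := kernel_rep hx
    rcases eq_or_ne i 0 with rfl | hne
    · rw [hv_zero, zero_add]
      rcases zc ξ with rfl | rfl
      · rw [zero_smul]; exact Set.mem_insert _ _
      · rw [one_smul]; exact Set.mem_insert_of_mem _ rfl
    · exfalso
      have hNN := NN_mem_Igrp hg hi hne
      have halt := bb_alternating hg hNN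
      rcases Nat.lt_or_ge n 2 with hn1 | hn2
      · have hn1' : n = 1 := by
          have := NeZero.ne n
          omega
        exact hnl (n_one_case hn1' halt)
      · exact no_alternating hg hn2 halt
  · intro x hx
    rcases hx with rfl | hx
    · exact zero_mem_kernel
    · rw [Set.mem_singleton_iff] at hx
      subst hx
      exact allOne_mem_kernel

end CHK

/-- a nonlinear circulant Hadamard code of length `4n = 2^s·n'`
(`n'` odd), seen as an HFP-code `⟨a, u⟩` of type `C_{4n} × C₂` with shift
permutations, has kernel `K(C) = {0, u}`, i.e. `dim K(C) = 1`.  (No parity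
assumption on `n` — Turyn's theorem is not invoked.) -/
theorem circulant_code_kernel_dim_one (n s n' : ℕ) [NeZero n] (hn' : Odd n')
    (hlen : 4 * n = 2 ^ s * n')
    (g : ZMod (4 * n) → ZMod 2) (hg : IsCircHadGen n g)
    (C : Set (ZMod (4 * n) → ZMod 2))
    (hC : C = {v | ∃ (i : ZMod (4 * n)) (ξ : ZMod 2),
      v = g + shift (4 * n) i g + ξ • allOne (4 * n)})
    (hnl : ¬ ∃ W : Submodule (ZMod 2) (ZMod (4 * n) → ZMod 2), (W : Set _) = C) :
    kernelOf C = {0, allOne (4 * n)} ∧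
      Module.finrank (ZMod 2) (Submodule.span (ZMod 2) (kernelOf C)) = 1 := by
  have hC' : C = CHK.codeSet n g := hC
  rw [hC'] at hnl ⊢
  have hker := CHK.main_kernel hg hnl
  refine ⟨hker, ?_⟩
  rw [hker, Submodule.span_insert_zero]
  exact finrank_span_singleton CHK.allOne_ne_zero
end

section
/- The binary code of length 4 consisting of the rows of the normalized binary matrix with rows (0000), (1100), (1010), (1001) together with their complements, where a = (1100) is assigned the permutation π_a = (1 2 3 4) (4-cycle), is an HFP-code of type C₄ × C₂ generated by a and u = (1111). -/
/-- Cyclic shift by `i` positions on binary vectors of length 4. -/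
def shift4 (i : Fin 4) (v : Fin 4 → ZMod 2) : Fin 4 → ZMod 2 :=
  fun t => v (t - i)

lemma shift_add (i : Fin 4) (v w : Fin 4 → ZMod 2) :
    shift4 i (v + w) = shift4 i v + shift4 i w := rfl

lemma shift_shift (i j : Fin 4) (v : Fin 4 → ZMod 2) :
    shift4 i (shift4 j v) = shift4 (i + j) v := by
  funext t; simp [shift4, sub_sub]

/-- the binary code of length 4 generated by `a = (1100)` (with
associated permutation the 4-cycle, i.e. the cyclic shift by one) and
`u = (1111)`, consisting of the rows `(0000), (1100), (1010), (1001)` of the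
normalized binary Hadamard matrix of order 4 and their complements, is an
HFP-code of type `C₄ × C₂`: it is a Hadamard code, the powers
`a^i = a + π_a(a) + ⋯ + π_a^{i−1}(a)` together with their complements exhaust `C`,
the `*`-operation is closed with `π` multiplicative (shift indices add), the
shifts are fixed-point-free except the identity, and `(i, ξ) ↦ a^i + ξu` is a
bijection `C₄ × C₂ ≃ C`. -/
theorem order4_circulant_hfp (a u : Fin 4 → ZMod 2)
    (haa : a = ![1, 1, 0, 0]) (hu : u = ![1, 1, 1, 1])
    (p : ℕ → Fin 4 → ZMod 2)
    (hp : ∀ i, p i = ∑ k ∈ Finset.range i, shift4 (Fin.ofNat 4 k) a)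
    (C : Set (Fin 4 → ZMod 2))
    (hC : C = {v | ∃ (i : ℕ) (ξ : ZMod 2), v = p i + ξ • u}) :
    -- C is exactly the rows of the normalized Hadamard matrix and complements
    C = {![0,0,0,0], ![1,1,0,0], ![1,0,1,0], ![1,0,0,1],
         ![1,1,1,1], ![0,0,1,1], ![0,1,0,1], ![0,1,1,0]} ∧
    -- C is a Hadamard code of length 4
    IsHadamardCodeLen (Fin 4) 4 C ∧
    -- propelinear: (a^i + ξu) * (a^j + ξ'u) = a^{i+j} + (ξ+ξ')u, shifts compose
    (∀ (i j : ℕ) (ξ ξ' : ZMod 2),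
      (p i + ξ • u) + shift4 (Fin.ofNat 4 i) (p j + ξ' • u) = p (i + j) + (ξ + ξ') • u) ∧
    -- full: nontrivial shifts are fixed-point-free
    (∀ i : Fin 4, i ≠ 0 → ∀ t : Fin 4, t - i ≠ t) ∧
    -- a has order 4 and u = a + a² + a³
    p 4 = 0 ∧ u = p 1 + p 2 + p 3 ∧
    -- C ≅ C₄ × C₂
    ∃ e : ZMod 4 × ZMod 2 ≃ C,
      ∀ q : ZMod 4 × ZMod 2, (e q : Fin 4 → ZMod 2) = p q.1.val + q.2 • u := by
  -- concrete values of p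
  have p0 : p 0 = ![0,0,0,0] := by rw [hp]; subst haa; decide
  have p1 : p 1 = ![1,1,0,0] := by
    rw [hp]; subst haa; simp [Finset.sum_range_succ]; decide
  have p2 : p 2 = ![1,0,1,0] := by
    rw [hp]; subst haa; simp [Finset.sum_range_succ]; decide
  have p3 : p 3 = ![1,0,0,1] := by
    rw [hp]; subst haa; simp [Finset.sum_range_succ]; decide
  have p4 : p 4 = 0 := by
    rw [hp]; subst haa; simp [Finset.sum_range_succ]; decide
  -- key additive identity
  have key : ∀ i j : ℕ, p i + shift4 (Fin.ofNat 4 i) (p j) = p (i + j) := by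
    intro i j
    induction j with
    | zero => rw [Nat.add_zero]; rw [hp 0]; simp [shift4]; rfl
    | succ j ih =>
        have h1 : p (j+1) = p j + shift4 (Fin.ofNat 4 j) a := by
          rw [hp, hp, Finset.sum_range_succ]
        have h2 : p (i + (j+1)) = p (i + j) + shift4 (Fin.ofNat 4 i + Fin.ofNat 4 j) a := by
          rw [show i + (j+1) = (i+j)+1 from rfl, hp (i+j+1), hp (i+j), Finset.sum_range_succ]
          push_cast
          rw [show Fin.ofNat 4 (i+j) = Fin.ofNat 4 i + Fin.ofNat 4 j from Fin.ext (by simp [Fin.val_add, Nat.add_mod])]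
        rw [h1, shift_add, shift_shift, h2, ← ih]
        abel
  have pper : ∀ i, p (i + 4) = p i := by
    intro i
    have := key i 4
    rw [p4] at this
    rw [← this]
    have : shift4 (Fin.ofNat 4 i) 0 = 0 := rfl
    rw [this, add_zero]
  have pmod : ∀ i, p i = p (i % 4) := by
    intro i
    induction i using Nat.strong_induction_on with
    | _ i ih =>
      rcases Nat.lt_or_ge i 4 with h | h
      · rw [Nat.mod_eq_of_lt h]
      · obtain ⟨j, rfl⟩ := Nat.exists_eq_add_of_le h
        rw [Nat.add_comm, pper, ih j (by omega), Nat.add_mod_right]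
  have shiftu : ∀ (i : Fin 4) (ξ : ZMod 2), shift4 i (ξ • u) = ξ • u := by
    intro i ξ
    funext t
    subst hu
    show ξ • (![1,1,1,1] : Fin 4 → ZMod 2) (t - i) = ξ • ![1,1,1,1] t
    have h : ∀ s : Fin 4, (![1,1,1,1] : Fin 4 → ZMod 2) s = 1 := by decide
    rw [h, h]
  -- set description
  have hCset : C = {![0,0,0,0], ![1,1,0,0], ![1,0,1,0], ![1,0,0,1],
       ![1,1,1,1], ![0,0,1,1], ![0,1,0,1], ![0,1,1,0]} := by
    rw [hC]
    ext v
    constructor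
    · rintro ⟨i, ξ, rfl⟩
      rw [pmod i]
      have h4 : i % 4 < 4 := Nat.mod_lt _ (by norm_num)
      subst hu
      interval_cases h : i % 4 <;>
        rw [show p _ = _ from by assumption] <;> fin_cases ξ <;> simp <;> decide
    · intro hv
      simp only [Set.mem_insert_iff, Set.mem_singleton_iff] at hv
      subst hu
      rcases hv with rfl|rfl|rfl|rfl|rfl|rfl|rfl|rfl
      · exact ⟨0, 0, by rw [p0]; decide⟩
      · exact ⟨1, 0, by rw [p1]; decide⟩
      · exact ⟨2, 0, by rw [p2]; decide⟩
      · exact ⟨3, 0, by rw [p3]; decide⟩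
      · exact ⟨0, 1, by rw [p0]; decide⟩
      · exact ⟨1, 1, by rw [p1]; decide⟩
      · exact ⟨2, 1, by rw [p2]; decide⟩
      · exact ⟨3, 1, by rw [p3]; decide⟩
  refine ⟨hCset, ?_, ?_, ?_, p4, ?_, ?_⟩
  · -- Hadamard code
    rw [hCset]
    refine ⟨rfl, by decide, ?_, ?_, ?_⟩
    · intro v hv
      simp only [Set.mem_insert_iff, Set.mem_singleton_iff] at hv ⊢
      rcases hv with rfl|rfl|rfl|rfl|rfl|rfl|rfl|rfl <;> decide
    · have : ({![0,0,0,0], ![1,1,0,0], ![1,0,1,0], ![1,0,0,1],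
         ![1,1,1,1], ![0,0,1,1], ![0,1,0,1], ![0,1,1,0]} : Set (Fin 4 → ZMod 2))
          = ↑({![0,0,0,0], ![1,1,0,0], ![1,0,1,0], ![1,0,0,1],
         ![1,1,1,1], ![0,0,1,1], ![0,1,0,1], ![0,1,1,0]} : Finset (Fin 4 → ZMod 2)) := by
        simp
      rw [this, Set.ncard_coe_finset]
      decide
    · intro v hv w hw h1 h2
      simp only [Set.mem_insert_iff, Set.mem_singleton_iff] at hv hw
      revert h1 h2
      rcases hv with rfl|rfl|rfl|rfl|rfl|rfl|rfl|rfl <;>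
        rcases hw with rfl|rfl|rfl|rfl|rfl|rfl|rfl|rfl <;> decide
  · -- propelinear
    intro i j ξ ξ'
    have := key i j
    rw [shift_add, shiftu]
    rw [← this]
    module
  · -- fixed point free
    decide
  · rw [p1, p2, p3, hu]; decide
  · -- equiv
    have hval : ∀ i : ZMod 4, ∀ ξ : ZMod 2, p i.val + ξ • u =
        ![![0,0,0,0], ![1,1,0,0], ![1,0,1,0], ![1,0,0,1]] i + ξ • u := by
      intro i ξ
      fin_cases i <;> simp [p0, p1, p2, p3, hu, ZMod.val]
    have hg : ∀ q : ZMod 4 × ZMod 2, p q.1.val + q.2 • u ∈ C := by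
      intro q; rw [hC]; exact ⟨q.1.val, q.2, rfl⟩
    let g : ZMod 4 × ZMod 2 → C := fun q => ⟨p q.1.val + q.2 • u, hg q⟩
    have hinj : Function.Injective g := by
      intro q q' h
      have h' := congrArg Subtype.val h
      simp only [g] at h'
      rw [hval q.1 q.2, hval q'.1 q'.2] at h'
      obtain ⟨i, ξ⟩ := q; obtain ⟨i', ξ'⟩ := q'
      subst hu
      revert h'
      fin_cases i <;> fin_cases i' <;> fin_cases ξ <;> fin_cases ξ' <;> decide
    have hsurj : Function.Surjective g := by
      rintro ⟨v, hv⟩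
      rw [hC] at hv
      obtain ⟨i, ξ, rfl⟩ := hv
      refine ⟨((i : ZMod 4), ξ), ?_⟩
      apply Subtype.ext
      show p ((i : ZMod 4)).val + ξ • u = p i + ξ • u
      rw [ZMod.val_natCast, ← pmod]
    exact ⟨Equiv.ofBijective g ⟨hinj, hsurj⟩, fun q => rfl⟩
end
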